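/- arXiv:2002.01697 — 4 statements merged into one kernel-verified Lean document; each statement's English description precedes it below -/
import Mathlib

section
/- There exist absolute constants C0, c > 0 such that the following holds. Fix r > 0, L ≥ C0/r, k ≥ 2, and ε ∈ (0, √3/(4√2)). Then there exist n ∈ ℕ and an L-Lipschitz generative model G : B₂^k(r) → S^{n-1} such that for every m ∈ ℕ, every measurement matrix A ∈ ℝ^{m×n}, and every decoder ψ : {−1,1}^m → ℝ^n satisfying ‖x − ψ(sign(Ax))‖₂ ≤ ε for all x ∈ G(B₂^k(r)), it must hold that m ≥ c·(k·log(Lr) + k/ε). -/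
open MeasureTheory ProbabilityTheory

/-- sign function: `1` if `0 ≤ v`, `-1` otherwise. -/
noncomputable def sgn (v : ℝ) : ℝ := if 0 ≤ v then 1 else -1

/-- 1-bit measurement map `Φ(x) = sign(Ax)` (entrywise), where the matrix `A ∈ ℝ^{m×n}`
is represented as a function `Fin m → Fin n → ℝ`. -/
noncomputable def Phi {m n : ℕ} (A : Fin m → Fin n → ℝ)
    (x : EuclideanSpace ℝ (Fin n)) : Fin m → ℝ :=
  fun i => sgn (∑ j, A i j * x j)

/-- normalized Hamming distance. -/
noncomputable def dH {m : ℕ} (v v' : Fin m → ℝ) : ℝ :=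
  ((Finset.univ.filter fun i => v i ≠ v' i).card : ℝ) / m

/-- geodesic distance on the unit sphere. -/
noncomputable def dS {n : ℕ} (x s : EuclideanSpace ℝ (Fin n)) : ℝ :=
  Real.arccos (inner ℝ x s) / Real.pi

/-- law of an `m × n` matrix with i.i.d. `N(0,1)` entries. -/
noncomputable def gaussianMatrix (m n : ℕ) : Measure (Fin m → Fin n → ℝ) :=
  Measure.pi fun _ : Fin m => Measure.pi fun _ : Fin n => gaussianReal 0 1

/-!
Tent bumps of radius `2 / L` around a `4 / L`-separated family of `(L r / 16) ^ k` centres give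
points of the model at pairwise distance at least `1 / √2 > 2 ε`; a decoder must assign them
distinct sign vectors, so `(L r / 16) ^ k ≤ 2 ^ m`. Away from the centres the model is
`z ↦ (v, 0, √(1 - ‖v‖²))` with `v = z / 2r`, a positive multiple of `(y, 0, 1)`, so its sign vectors
are sign patterns of `m` affine functionals of `y ∈ ℝ^k`. There are at most
`∑_{i ≤ k} (m choose i) ≤ (e m / k) ^ k` of those (Cover's count: patterns realised on both sides
of the last hyperplane are realised on the hyperplane itself), while a `5 ε r`-separated family of
`(1 / 20 ε) ^ k` such points needs distinct patterns. Taking logarithms gives both terms.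
-/

open Finset Module Metric
open scoped ENNReal

theorem sum_range_succ_choose_succ (m d : ℕ) :
    ∑ i ∈ range (d + 1), (m + 1).choose i =
      ∑ i ∈ range (d + 1), m.choose i + ∑ i ∈ range d, m.choose i := by
  induction d with
  | zero => simp
  | succ d ih =>
    rw [sum_range_succ, ih, sum_range_succ _ (d + 1), sum_range_succ _ d, Nat.choose_succ_succ']
    ring

theorem sum_range_choose_le_exp_mul_div_pow {m d : ℕ} (hd : 1 ≤ d) (hdm : d ≤ m) :
    (∑ i ∈ range (d + 1), m.choose i : ℝ) ≤ (Real.exp 1 * m / d) ^ d := by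
  have hd₀ : (0 : ℝ) < d := by exact_mod_cast hd
  have hm₀ : (0 : ℝ) < m := by exact_mod_cast hd.trans hdm
  set x : ℝ := d / m
  have hx₀ : 0 < x := by positivity
  have hx₁ : x ≤ 1 := div_le_one_of_le₀ (by exact_mod_cast hdm) hm₀.le
  have hexp : (∑ i ∈ range (d + 1), m.choose i : ℝ) * x ^ d ≤ Real.exp d := calc
    (∑ i ∈ range (d + 1), m.choose i : ℝ) * x ^ d
        ≤ ∑ i ∈ range (d + 1), (m.choose i : ℝ) * x ^ i := by
      rw [sum_mul]
      refine sum_le_sum fun i hi => mul_le_mul_of_nonneg_left ?_ (by positivity)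
      exact pow_le_pow_of_le_one hx₀.le hx₁ (Nat.lt_succ_iff.1 (mem_range.1 hi))
    _ ≤ ∑ i ∈ range (m + 1), (m.choose i : ℝ) * x ^ i :=
      sum_le_sum_of_subset_of_nonneg (range_subset_range.2 (by omega)) fun _ _ _ => by positivity
    _ = (x + 1) ^ m := by rw [add_pow]; simp [mul_comm]
    _ ≤ Real.exp x ^ m := by gcongr; linarith [Real.add_one_le_exp x]
    _ = Real.exp d := by rw [← Real.exp_nat_mul, mul_div_cancel₀ _ hm₀.ne']
  calc (∑ i ∈ range (d + 1), m.choose i : ℝ) ≤ Real.exp d / x ^ d :=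
        (le_div_iff₀ (by positivity)).2 hexp
    _ = (Real.exp 1 * m / d) ^ d := by
      rw [← Real.exp_one_pow, div_pow, div_pow, mul_pow]
      field_simp [x]

section SignPattern

variable {V : Type*} [AddCommGroup V] [Module ℝ V] {m : ℕ}

noncomputable def signPattern (f : Fin m → V →ᵃ[ℝ] ℝ) (x : V) : Fin m → Bool :=
  fun i => decide (0 ≤ f i x)

lemma signPattern_lineMap {f : Fin m → V →ᵃ[ℝ] ℝ} {x y : V}
    (h : signPattern f x = signPattern f y) {t : ℝ} (ht₀ : 0 ≤ t) (ht₁ : t ≤ 1) :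
    signPattern f (AffineMap.lineMap x y t) = signPattern f x := by
  funext i
  have hi : 0 ≤ f i x ↔ 0 ≤ f i y := by simpa [signPattern] using congrFun h i
  simp only [signPattern, decide_eq_decide]
  rw [AffineMap.apply_lineMap, AffineMap.lineMap_apply_module, smul_eq_mul, smul_eq_mul]
  by_cases hx : 0 ≤ f i x
  · have := hi.1 hx
    simp only [hx, iff_true]
    positivity
  · have hy := mt hi.2 hx
    rw [not_le] at hx hy
    simp only [not_le.2 hx, iff_false, not_le]
    nlinarith [mul_le_mul_of_nonneg_left (le_max_left (f i x) (f i y)) (sub_nonneg.2 ht₁),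
      mul_le_mul_of_nonneg_left (le_max_right (f i x) (f i y)) ht₀, max_lt hx hy]

lemma exists_signPattern_eq_of_nonneg_of_neg {f : Fin m → V →ᵃ[ℝ] ℝ} {g : V →ᵃ[ℝ] ℝ} {x y : V}
    (h : signPattern f x = signPattern f y) (hx : 0 ≤ g x) (hy : g y < 0) :
    ∃ z, g z = 0 ∧ signPattern f z = signPattern f x := by
  have hd : 0 < g x - g y := by linarith
  refine ⟨AffineMap.lineMap x y (g x / (g x - g y)), ?_,
    signPattern_lineMap h (by positivity) ((div_le_one hd).2 (by linarith))⟩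
  rw [AffineMap.apply_lineMap, AffineMap.lineMap_apply_module, smul_eq_mul, smul_eq_mul]
  field_simp
  ring

lemma exists_subset_range_signPattern_comp [FiniteDimensional ℝ V] (f : Fin m → V →ᵃ[ℝ] ℝ)
    (g : V →ᵃ[ℝ] ℝ)
    (h : (signPattern f '' {x | 0 ≤ g x} ∩ signPattern f '' {x | g x < 0}).Nonempty) :
    ∃ (W : Submodule ℝ V) (e : W →ᵃ[ℝ] V), finrank ℝ W + 1 = finrank ℝ V ∧
      signPattern f '' {x | 0 ≤ g x} ∩ signPattern f '' {x | g x < 0} ⊆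
        Set.range (signPattern fun i => (f i).comp e) := by
  obtain ⟨_, ⟨x, hx, rfl⟩, ⟨y, hy, hxy⟩⟩ := h
  obtain ⟨x₀, hx₀, -⟩ := exists_signPattern_eq_of_nonneg_of_neg hxy.symm hx hy
  have hg : g.linear ≠ 0 := fun h₀ => by
    have := g.linearMap_vsub x y
    simp only [h₀, LinearMap.zero_apply, vsub_eq_sub] at this
    simp only [Set.mem_ofPred_eq] at hx hy
    linarith
  let W := LinearMap.ker g.linear
  refine ⟨W, W.subtype.toAffineMap + AffineMap.const ℝ W x₀,
    Module.Dual.finrank_ker_add_one_of_ne_zero hg, ?_⟩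
  rintro _ ⟨⟨x, hx, rfl⟩, ⟨y, hy, hxy⟩⟩
  obtain ⟨z, hz, hzx⟩ := exists_signPattern_eq_of_nonneg_of_neg hxy.symm hx hy
  refine ⟨⟨z - x₀, ?_⟩, ?_⟩
  · rw [LinearMap.mem_ker, ← vsub_eq_sub, g.linearMap_vsub, hz, hx₀, vsub_self]
  · rw [← hzx]
    funext i
    simp [signPattern]

theorem ncard_range_signPattern_le [FiniteDimensional ℝ V] (f : Fin m → V →ᵃ[ℝ] ℝ) :
    (Set.range (signPattern f)).ncard ≤ ∑ i ∈ range (finrank ℝ V + 1), m.choose i := by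
  induction m generalizing V with
  | zero =>
    calc (Set.range (signPattern f)).ncard ≤ (Set.univ : Set (Fin 0 → Bool)).ncard :=
          Set.ncard_le_ncard (Set.subset_univ _)
      _ = ∑ i ∈ range (finrank ℝ V + 1), Nat.choose 0 i := by simp [sum_range_succ']
  | succ m ih =>
    -- Split the patterns by their last bit, i.e. by the side of the hyperplane `g = 0`.
    set g := f (Fin.last m)
    set A := signPattern (Fin.init f) '' {x | 0 ≤ g x}
    set B := signPattern (Fin.init f) '' {x | g x < 0}
    have hsplit : Set.range (signPattern f) ⊆
        (Fin.snoc · true) '' A ∪ (Fin.snoc · false) '' B := by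
      rintro _ ⟨x, rfl⟩
      have hx' : signPattern f x = Fin.snoc (signPattern (Fin.init f) x) (decide (0 ≤ g x)) :=
        (Fin.snoc_init_self _).symm
      by_cases hx : 0 ≤ g x
      · exact Or.inl ⟨_, ⟨x, hx, rfl⟩, by simp [hx', hx]⟩
      · exact Or.inr ⟨_, ⟨x, not_le.1 hx, rfl⟩, by simp [hx', hx]⟩
    have hunion : A ∪ B ⊆ Set.range (signPattern (Fin.init f)) := by
      rintro _ (⟨x, -, rfl⟩ | ⟨x, -, rfl⟩) <;> exact ⟨x, rfl⟩
    have hinter : (A ∩ B).ncard ≤ ∑ i ∈ range (finrank ℝ V), m.choose i := by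
      rcases (A ∩ B).eq_empty_or_nonempty with hAB | hAB
      · simp [hAB]
      obtain ⟨W, e, hW, hsub⟩ := exists_subset_range_signPattern_comp (Fin.init f) g hAB
      rw [← hW]
      exact (Set.ncard_le_ncard hsub).trans (ih _)
    have hsnoc (b : Bool) := Fin.snoc_left_injective (α := fun _ : Fin (m + 1) => Bool) b
    calc (Set.range (signPattern f)).ncard
        ≤ ((Fin.snoc · true) '' A ∪ (Fin.snoc · false) '' B).ncard := Set.ncard_le_ncard hsplit
      _ ≤ A.ncard + B.ncard := by
        grw [Set.ncard_union_le, Set.ncard_image_of_injective _ (hsnoc true),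
          Set.ncard_image_of_injective _ (hsnoc false)]
      _ = (A ∪ B).ncard + (A ∩ B).ncard := (Set.ncard_union_add_ncard_inter A B).symm
      _ ≤ ∑ i ∈ range (finrank ℝ V + 1), m.choose i + ∑ i ∈ range (finrank ℝ V), m.choose i :=
        add_le_add ((Set.ncard_le_ncard hunion).trans (ih _)) hinter
      _ = _ := (sum_range_succ_choose_succ m _).symm

end SignPattern

section Packing

variable {E : Type*} [NormedAddCommGroup E] [NormedSpace ℝ E] [FiniteDimensional ℝ E]

lemma mul_pow_finrank_le_of_measure_closedBall_le [MeasurableSpace E] [BorelSpace E]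
    (μ : Measure E) [μ.IsAddHaarMeasure] {a b : ℝ} (ha : 0 ≤ a) (hb : 0 ≤ b) (n₁ n₂ : ℕ)
    (h : n₁ * μ (closedBall 0 a) ≤ n₂ * μ (closedBall 0 b)) :
    n₁ * a ^ finrank ℝ E ≤ n₂ * b ^ finrank ℝ E := by
  have hν₀ : μ (ball 0 1) ≠ 0 := (measure_ball_pos μ 0 one_pos).ne'
  have hν : μ (ball 0 1) ≠ ⊤ := measure_ball_lt_top.ne
  rwa [Measure.addHaar_closedBall μ _ ha, Measure.addHaar_closedBall μ _ hb, ← mul_assoc,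
    ← mul_assoc, ENNReal.mul_le_mul_iff_left hν₀ hν, ← ENNReal.ofReal_natCast,
    ← ENNReal.ofReal_natCast n₂, ← ENNReal.ofReal_mul (by positivity),
    ← ENNReal.ofReal_mul (by positivity), ENNReal.ofReal_le_ofReal_iff (by positivity)] at h

lemma card_mul_pow_le_of_pairwise_le_dist {c : E} {ρ s : ℝ} (hρ : 0 ≤ ρ) (hs : 0 < s)
    {T : Finset E} (hTc : ↑T ⊆ closedBall c ρ) (hTs : (T : Set E).Pairwise (s ≤ dist · ·)) :
    T.card * (s / 3) ^ finrank ℝ E ≤ (ρ + s) ^ finrank ℝ E := by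
  borelize E
  set μ : Measure E := Measure.addHaar
  simpa using mul_pow_finrank_le_of_measure_closedBall_le μ (by positivity) (by positivity)
    T.card 1 <| calc
      T.card * μ (closedBall 0 (s / 3)) = μ (⋃ x ∈ T, closedBall x (s / 3)) := by
        rw [measure_biUnion_finset _ fun _ _ => measurableSet_closedBall]
        · simp [μ.addHaar_closedBall_center]
        intro x hx y hy hxy
        exact closedBall_disjoint_closedBall (by linarith [hTs hx hy hxy])
      _ ≤ μ (closedBall c (ρ + s)) := measure_mono <| Set.iUnion₂_subset fun x hx =>
        closedBall_subset_closedBall' (by linarith [mem_closedBall.1 (hTc hx)])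
      _ = ((1 : ℕ) : ℝ≥0∞) * μ (closedBall 0 (ρ + s)) := by
        rw [Nat.cast_one, one_mul, μ.addHaar_closedBall_center c]

lemma pow_le_card_mul_pow_of_subset_biUnion {c : E} {ρ s : ℝ} (hρ : 0 ≤ ρ) (hs : 0 ≤ s)
    {T : Finset E} (hT : closedBall c ρ ⊆ ⋃ x ∈ T, closedBall x s) :
    ρ ^ finrank ℝ E ≤ T.card * s ^ finrank ℝ E := by
  borelize E
  set μ : Measure E := Measure.addHaar
  simpa using mul_pow_finrank_le_of_measure_closedBall_le μ hρ hs 1 T.card <| calc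
    ((1 : ℕ) : ℝ≥0∞) * μ (closedBall 0 ρ) = μ (closedBall c ρ) := by
      rw [Nat.cast_one, one_mul, μ.addHaar_closedBall_center c]
    _ ≤ ∑ x ∈ T, μ (closedBall x s) := (measure_mono hT).trans (measure_biUnion_finset_le _ _)
    _ = T.card * μ (closedBall 0 s) := by simp [μ.addHaar_closedBall_center]

theorem exists_separated_family_mem_closedBall (c : E) {ρ s : ℝ} (hρ : 0 ≤ ρ) (hs : 0 < s) :
    ∃ (M : ℕ) (p : Fin M → E), (∀ j, p j ∈ closedBall c ρ) ∧
      Pairwise (fun i j => s ≤ dist (p i) (p j)) ∧ (ρ / s) ^ finrank ℝ E ≤ M := by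
  classical
  let P : Finset E → Prop := fun T => ↑T ⊆ closedBall c ρ ∧ (T : Set E).Pairwise (s ≤ dist · ·)
  obtain ⟨T, hT, hmax⟩ : ∃ T, P T ∧ ∀ T', P T' → T'.card ≤ T.card := by
    let S := {n | ∃ T, P T ∧ T.card = n}
    have hS : BddAbove S := ⟨⌊(ρ + s) ^ finrank ℝ E / (s / 3) ^ finrank ℝ E⌋₊, by
      rintro _ ⟨T, hT, rfl⟩
      exact Nat.le_floor ((le_div_iff₀ (by positivity)).2
        (card_mul_pow_le_of_pairwise_le_dist hρ hs hT.1 hT.2))⟩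
    obtain ⟨T, hT, hcard⟩ := Nat.sSup_mem (s := S) ⟨0, ∅, by simp [P], rfl⟩ hS
    exact ⟨T, hT, fun T' hT' => hcard ▸ le_csSup hS ⟨T', hT', rfl⟩⟩
  -- A maximal separated set is an `s`-net.
  have hcover : closedBall c ρ ⊆ ⋃ x ∈ T, closedBall x s := by
    intro y hy
    by_contra hcon
    simp only [Set.mem_iUnion, mem_closedBall, not_exists, not_le] at hcon
    have hyT : y ∉ T := fun h => by simpa using (hcon y h).trans_le' hs.le
    have := hmax (insert y T) ⟨by simpa [Set.insert_subset_iff] using ⟨hy, hT.1⟩, ?_⟩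
    · simp [card_insert_of_notMem hyT] at this
    rw [coe_insert, Set.pairwise_insert]
    exact ⟨hT.2, fun x hx _ => ⟨(hcon x hx).le, dist_comm x y ▸ (hcon x hx).le⟩⟩
  refine ⟨T.card, fun j => T.equivFin.symm j, fun j => hT.1 (T.equivFin.symm j).2,
    fun i j hij => hT.2 (T.equivFin.symm i).2 (T.equivFin.symm j).2 ?_, ?_⟩
  · exact fun h => hij (T.equivFin.symm.injective (Subtype.ext h))
  rw [div_pow, div_le_iff₀ (by positivity)]
  exact pow_le_card_mul_pow_of_subset_biUnion hρ hs.le hcover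

theorem exists_two_separated_families [Nontrivial E] {r s₁ s₂ : ℝ} (hr : 0 < r)
    (hs₁ : 0 < s₁) (hs₂ : 0 < s₂) :
    ∃ (M N : ℕ) (p : Fin M → E) (q : Fin N → E),
      (∀ j, ‖p j‖ ≤ r) ∧ (∀ j, ‖q j‖ ≤ r) ∧ (∀ i j, r / 2 ≤ dist (q i) (p j)) ∧
      Pairwise (fun i j => s₁ ≤ dist (p i) (p j)) ∧ Pairwise (fun i j => s₂ ≤ dist (q i) (q j)) ∧
      (r / (4 * s₁)) ^ finrank ℝ E ≤ M ∧ (r / (4 * s₂)) ^ finrank ℝ E ≤ N := by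
  obtain ⟨e, he⟩ := exists_norm_eq E (by positivity : 0 ≤ r / 2)
  obtain ⟨M, p, hp, hpp, hM⟩ :=
    exists_separated_family_mem_closedBall (-e) (ρ := r / 4) (by positivity) hs₁
  obtain ⟨N, q, hq, hqq, hN⟩ :=
    exists_separated_family_mem_closedBall e (ρ := r / 4) (by positivity) hs₂
  refine ⟨M, N, p, q, fun j => ?_, fun j => ?_, fun i j => ?_, hpp, hqq, by rwa [div_div] at hM,
    by rwa [div_div] at hN⟩
  · linarith [norm_le_of_mem_closedBall (hp j), norm_neg e]
  · linarith [norm_le_of_mem_closedBall (hq j)]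
  · have hee : dist e (-e) = r := by
      rw [dist_eq_norm, sub_neg_eq_add, ← two_smul ℝ, norm_smul, he, Real.norm_two]
      ring
    linarith [dist_triangle4 e (q i) (p j) (-e), mem_closedBall'.1 (hq i), mem_closedBall.1 (hp j)]

end Packing

section Euclidean

variable {a b n : ℕ}

noncomputable def euclideanAppend (v : EuclideanSpace ℝ (Fin a)) (w : EuclideanSpace ℝ (Fin b)) :
    EuclideanSpace ℝ (Fin (a + b)) :=
  WithLp.toLp 2 (Fin.append v.ofLp w.ofLp)

lemma euclideanAppend_sub (v v' : EuclideanSpace ℝ (Fin a)) (w w' : EuclideanSpace ℝ (Fin b)) :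
    euclideanAppend v w - euclideanAppend v' w' = euclideanAppend (v - v') (w - w') := by
  ext j
  refine Fin.addCases (fun l => ?_) (fun l => ?_) j <;> simp [euclideanAppend]

lemma sum_mul_euclideanAppend (c : Fin (a + b) → ℝ) (v : EuclideanSpace ℝ (Fin a))
    (w : EuclideanSpace ℝ (Fin b)) :
    ∑ j, c j * euclideanAppend v w j =
      ∑ l, c (Fin.castAdd b l) * v l + ∑ l, c (Fin.natAdd a l) * w l := by
  simp [euclideanAppend, Fin.sum_univ_add]

lemma norm_euclideanAppend_sq (v : EuclideanSpace ℝ (Fin a)) (w : EuclideanSpace ℝ (Fin b)) :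
    ‖euclideanAppend v w‖ ^ 2 = ‖v‖ ^ 2 + ‖w‖ ^ 2 := by
  simp [EuclideanSpace.norm_sq_eq, euclideanAppend, Fin.sum_univ_add]

lemma norm_le_norm_euclideanAppend_left (v : EuclideanSpace ℝ (Fin a))
    (w : EuclideanSpace ℝ (Fin b)) : ‖v‖ ≤ ‖euclideanAppend v w‖ :=
  (sq_le_sq₀ (norm_nonneg _) (norm_nonneg _)).1 <| by
    rw [norm_euclideanAppend_sq]; exact le_add_of_nonneg_right (sq_nonneg _)

lemma norm_le_norm_euclideanAppend_right (v : EuclideanSpace ℝ (Fin a))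
    (w : EuclideanSpace ℝ (Fin b)) : ‖w‖ ≤ ‖euclideanAppend v w‖ :=
  (sq_le_sq₀ (norm_nonneg _) (norm_nonneg _)).1 <| by
    rw [norm_euclideanAppend_sq]; exact le_add_of_nonneg_left (sq_nonneg _)

lemma sq_add_sq_le_norm_sq {ι : Type*} [Fintype ι] (w : EuclideanSpace ℝ ι) {i j : ι}
    (hij : i ≠ j) : w i ^ 2 + w j ^ 2 ≤ ‖w‖ ^ 2 := by
  classical
  rw [EuclideanSpace.norm_sq_eq, ← sum_pair (f := fun l => w l ^ 2) hij]
  simp only [Real.norm_eq_abs, sq_abs]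
  exact sum_le_sum_of_subset_of_nonneg (subset_univ _) fun l _ _ => sq_nonneg _

lemma norm_sq_le_card_mul_sq {ι : Type*} [Fintype ι] (w : EuclideanSpace ℝ ι) (s : Finset ι)
    (hs : ∀ j ∉ s, w j = 0) {B : ℝ} (hB : ∀ j, |w j| ≤ B) : ‖w‖ ^ 2 ≤ s.card * B ^ 2 := by
  rw [EuclideanSpace.norm_sq_eq, ← sum_subset (subset_univ s) fun j _ hj => by simp [hs j hj]]
  simp only [Real.norm_eq_abs, sq_abs]
  exact (sum_le_card_nsmul s _ _ fun j _ => sq_le_sq' (abs_le.1 (hB j)).1 (abs_le.1 (hB j)).2)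
    |>.trans_eq (nsmul_eq_mul _ _)

noncomputable def sphereLift (v : EuclideanSpace ℝ (Fin n)) : EuclideanSpace ℝ (Fin (n + 1)) :=
  euclideanAppend v (EuclideanSpace.single 0 √(1 - ‖v‖ ^ 2))

lemma norm_sphereLift {v : EuclideanSpace ℝ (Fin n)} (hv : ‖v‖ ≤ 1) : ‖sphereLift v‖ = 1 := by
  have : ‖sphereLift v‖ ^ 2 = 1 := by
    rw [sphereLift, norm_euclideanAppend_sq, PiLp.norm_single, Real.norm_eq_abs, sq_abs,
      Real.sq_sqrt (by nlinarith [norm_nonneg v])]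
    ring
  exact (pow_eq_one_iff_of_nonneg (norm_nonneg _) two_ne_zero).1 this

lemma sphereLift_sub (v w : EuclideanSpace ℝ (Fin n)) :
    sphereLift v - sphereLift w =
      euclideanAppend (v - w) (EuclideanSpace.single 0 (√(1 - ‖v‖ ^ 2) - √(1 - ‖w‖ ^ 2))) := by
  rw [sphereLift, sphereLift, euclideanAppend_sub, ← PiLp.single_sub]

lemma norm_sub_le_norm_sphereLift_sub (v w : EuclideanSpace ℝ (Fin n)) :
    ‖v - w‖ ≤ ‖sphereLift v - sphereLift w‖ := by
  rw [sphereLift_sub]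
  exact norm_le_norm_euclideanAppend_left _ _

lemma sq_sqrt_one_sub_sq_sub_sqrt_le {a b : ℝ} (ha : 0 ≤ a) (hb : 0 ≤ b) (ha₂ : a ^ 2 ≤ 1 / 2)
    (hb₂ : b ^ 2 ≤ 1 / 2) : (√(1 - a ^ 2) - √(1 - b ^ 2)) ^ 2 ≤ (a - b) ^ 2 := by
  set S := √(1 - a ^ 2)
  set T := √(1 - b ^ 2)
  have hS : S ^ 2 = 1 - a ^ 2 := Real.sq_sqrt (by linarith)
  have hT : T ^ 2 = 1 - b ^ 2 := Real.sq_sqrt (by linarith)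
  have haS : a ≤ S := Real.le_sqrt_of_sq_le (by linarith)
  have hbT : b ≤ T := Real.le_sqrt_of_sq_le (by linarith)
  have hST : 0 < S + T :=
    add_pos_of_pos_of_nonneg (Real.sqrt_pos.2 (by linarith)) (Real.sqrt_nonneg _)
  refine le_of_mul_le_mul_right ?_ (pow_pos hST 2)
  calc (S - T) ^ 2 * (S + T) ^ 2 = (S ^ 2 - T ^ 2) ^ 2 := by ring
    _ = (a - b) ^ 2 * (a + b) ^ 2 := by rw [hS, hT]; ring
    _ ≤ (a - b) ^ 2 * (S + T) ^ 2 := by gcongr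

lemma norm_sphereLift_sub_sq_le {v w : EuclideanSpace ℝ (Fin n)} (hv : ‖v‖ ^ 2 ≤ 1 / 2)
    (hw : ‖w‖ ^ 2 ≤ 1 / 2) : ‖sphereLift v - sphereLift w‖ ^ 2 ≤ 2 * ‖v - w‖ ^ 2 := by
  rw [sphereLift_sub, norm_euclideanAppend_sq, PiLp.norm_single, Real.norm_eq_abs, sq_abs]
  have := (sq_sqrt_one_sub_sq_sub_sqrt_le (norm_nonneg v) (norm_nonneg w) hv hw).trans
    (sq_le_sq' (abs_le.1 (abs_norm_sub_norm_le v w)).1 (abs_le.1 (abs_norm_sub_norm_le v w)).2)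
  linarith

end Euclidean

section Tent

variable {X ι : Type*} [PseudoMetricSpace X]

noncomputable def tentVector (p : ι → X) (δ : ℝ) (z : X) : EuclideanSpace ℝ ι :=
  WithLp.toLp 2 fun j => max 0 (1 - dist z (p j) / δ)

variable {p : ι → X} {δ : ℝ}

lemma tentVector_apply (z : X) (j : ι) :
    tentVector p δ z j = max 0 (1 - dist z (p j) / δ) := rfl

lemma tentVector_apply_eq_zero (hδ : 0 < δ) {z : X} {j : ι} (h : δ ≤ dist z (p j)) :
    tentVector p δ z j = 0 := by
  simpa [tentVector_apply] using (one_le_div hδ).2 h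

lemma tentVector_eq_zero (hδ : 0 < δ) {z : X} (h : ∀ j, δ ≤ dist z (p j)) :
    tentVector p δ z = 0 := by
  ext j
  exact tentVector_apply_eq_zero hδ (h j)

lemma tentVector_apply_self (j : ι) : tentVector p δ (p j) j = 1 := by
  simp [tentVector_apply]

lemma abs_tentVector_apply_le_one (hδ : 0 < δ) (z : X) (j : ι) : |tentVector p δ z j| ≤ 1 := by
  rw [tentVector_apply, abs_of_nonneg (le_max_left _ _)]
  exact max_le zero_le_one (by linarith [div_nonneg (dist_nonneg (x := z) (y := p j)) hδ.le])

lemma abs_tentVector_apply_sub_le (hδ : 0 < δ) (z z' : X) (j : ι) :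
    |tentVector p δ z j - tentVector p δ z' j| ≤ dist z z' / δ := by
  simp only [tentVector_apply, max_comm (0 : ℝ)]
  refine (abs_max_sub_max_le_abs _ _ _).trans ?_
  rw [sub_sub_sub_cancel_left, ← sub_div, abs_div, abs_of_pos hδ]
  gcongr
  exact abs_dist_sub_le z' z (p j) |>.trans_eq (dist_comm _ _)

lemma card_filter_dist_lt_le_one [Fintype ι] [DecidableEq ι]
    (hp : Pairwise fun i j => 2 * δ ≤ dist (p i) (p j)) (z : X) : #{j | dist z (p j) < δ} ≤ 1 := by
  refine card_le_one.2 fun i hi j hj => by_contra fun hij => ?_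
  simp only [mem_filter, mem_univ, true_and] at hi hj
  linarith [hp hij, dist_triangle_left (p i) (p j) z]

lemma norm_tentVector_le_one [Fintype ι] (hδ : 0 < δ)
    (hp : Pairwise fun i j => 2 * δ ≤ dist (p i) (p j)) (z : X) : ‖tentVector p δ z‖ ≤ 1 := by
  classical
  have h := norm_sq_le_card_mul_sq (tentVector p δ z) {j | dist z (p j) < δ}
    (fun j hj => tentVector_apply_eq_zero hδ (by simpa using hj)) (abs_tentVector_apply_le_one hδ z)
  have := card_filter_dist_lt_le_one hp z
  rw [one_pow, mul_one] at h
  exact (sq_le_one_iff₀ (norm_nonneg _)).1 (h.trans (by exact_mod_cast this))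

lemma norm_tentVector_sub_sq_le [Fintype ι] (hδ : 0 < δ)
    (hp : Pairwise fun i j => 2 * δ ≤ dist (p i) (p j)) (z z' : X) :
    ‖tentVector p δ z - tentVector p δ z'‖ ^ 2 ≤ 2 * (dist z z' / δ) ^ 2 := by
  classical
  let S : Finset ι := {j | dist z (p j) < δ}
  let S' : Finset ι := {j | dist z' (p j) < δ}
  refine (norm_sq_le_card_mul_sq _ (S ∪ S') (fun j hj => ?_)
    (fun j => abs_tentVector_apply_sub_le hδ z z' j)).trans ?_
  · simp only [S, S', mem_union, mem_filter, mem_univ, true_and, not_or, not_lt] at hj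
    rw [PiLp.sub_apply, tentVector_apply_eq_zero hδ hj.1, tentVector_apply_eq_zero hδ hj.2,
      sub_zero]
  · have := (card_union_le _ _).trans
      (add_le_add (card_filter_dist_lt_le_one hp z) (card_filter_dist_lt_le_one hp z'))
    gcongr
    exact_mod_cast this

end Tent

section Measurements

variable {m n : ℕ}

noncomputable def signsOf (b : Fin m → Bool) : Fin m → ℝ := fun i => if b i then 1 else -1

lemma Phi_eq_signsOf (A : Fin m → Fin n → ℝ) (x : EuclideanSpace ℝ (Fin n)) :
    Phi A x = signsOf fun i => decide (0 ≤ ∑ j, A i j * x j) := by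
  funext i
  simp [Phi, sgn, signsOf]

lemma norm_sub_le_of_Phi_eq {A : Fin m → Fin n → ℝ} {ψ : (Fin m → ℝ) → EuclideanSpace ℝ (Fin n)}
    {ε : ℝ} {x y : EuclideanSpace ℝ (Fin n)} (hx : ‖x - ψ (Phi A x)‖ ≤ ε)
    (hy : ‖y - ψ (Phi A y)‖ ≤ ε) (h : Phi A x = Phi A y) : ‖x - y‖ ≤ 2 * ε := calc
  ‖x - y‖ = ‖(x - ψ (Phi A x)) - (y - ψ (Phi A y))‖ := by rw [h, sub_sub_sub_cancel_right]
  _ ≤ ‖x - ψ (Phi A x)‖ + ‖y - ψ (Phi A y)‖ := norm_sub_le _ _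
  _ ≤ 2 * ε := by linarith

variable {A : Fin m → Fin n → ℝ} {ψ : (Fin m → ℝ) → EuclideanSpace ℝ (Fin n)} {ε : ℝ} {M : ℕ}
  {x : Fin M → EuclideanSpace ℝ (Fin n)}

lemma injective_Phi_comp_of_decoder (hψ : ∀ i, ‖x i - ψ (Phi A (x i))‖ ≤ ε)
    (hx : Pairwise fun i j => 2 * ε < ‖x i - x j‖) : Function.Injective fun i => Phi A (x i) :=
  fun i j h => by_contra fun hij => (hx hij).not_ge (norm_sub_le_of_Phi_eq (hψ i) (hψ j) h)

lemma card_le_two_pow_of_decoder (hψ : ∀ i, ‖x i - ψ (Phi A (x i))‖ ≤ ε)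
    (hx : Pairwise fun i j => 2 * ε < ‖x i - x j‖) : M ≤ 2 ^ m := by
  have hinj : Function.Injective fun i l => decide (0 ≤ ∑ j, A l j * x i j) :=
    .of_comp (f := signsOf) <| by
      simpa only [Function.comp_def, ← Phi_eq_signsOf] using injective_Phi_comp_of_decoder hψ hx
  simpa using Fintype.card_le_of_injective _ hinj

lemma card_le_sum_choose_of_decoder {V : Type*} [AddCommGroup V] [Module ℝ V]
    [FiniteDimensional ℝ V] (f : Fin m → V →ᵃ[ℝ] ℝ) (y : Fin M → V)
    (hψ : ∀ i, ‖x i - ψ (Phi A (x i))‖ ≤ ε) (hx : Pairwise fun i j => 2 * ε < ‖x i - x j‖)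
    (hy : ∀ i, Phi A (x i) = signsOf (signPattern f (y i))) :
    M ≤ ∑ i ∈ range (finrank ℝ V + 1), m.choose i := by
  have hinj : Function.Injective fun i => signPattern f (y i) :=
    .of_comp (f := signsOf) <| by
      simpa only [Function.comp_def, ← hy] using injective_Phi_comp_of_decoder hψ hx
  calc M = (Set.range fun i => signPattern f (y i)).ncard := by
        rw [Set.ncard_range_of_injective hinj, Nat.card_eq_fintype_card, Fintype.card_fin]
    _ ≤ (Set.range (signPattern f)).ncard :=
        Set.ncard_le_ncard (Set.range_subset_iff.2 fun i => ⟨y i, rfl⟩)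
    _ ≤ _ := ncard_range_signPattern_le f

end Measurements

section Chart

variable {m k M : ℕ}

-- The `i`-th row of `A` read in the affine chart `y ↦ (y, 0, 1)` of `ℝ^(k + M + 1)`.
noncomputable def chartFunctional (A : Fin m → Fin (k + M + 1) → ℝ) (i : Fin m) :
    EuclideanSpace ℝ (Fin k) →ᵃ[ℝ] ℝ :=
  (innerₛₗ ℝ (WithLp.toLp 2 fun l => A i (Fin.castAdd 1 (Fin.castAdd M l)))).toAffineMap +
    AffineMap.const ℝ _ (A i (Fin.natAdd (k + M) 0))

lemma chartFunctional_apply (A : Fin m → Fin (k + M + 1) → ℝ) (i : Fin m)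
    (y : EuclideanSpace ℝ (Fin k)) :
    chartFunctional A i y =
      ∑ l, A i (Fin.castAdd 1 (Fin.castAdd M l)) * y l + A i (Fin.natAdd (k + M) 0) := by
  simp [chartFunctional, PiLp.inner_apply, mul_comm]

lemma Phi_sphereLift_euclideanAppend_zero (A : Fin m → Fin (k + M + 1) → ℝ)
    {v : EuclideanSpace ℝ (Fin k)} (hv : ‖v‖ < 1) :
    Phi A (sphereLift (euclideanAppend v (0 : EuclideanSpace ℝ (Fin M)))) =
      signsOf (signPattern (chartFunctional A) ((√(1 - ‖v‖ ^ 2))⁻¹ • v)) := by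
  set s := √(1 - ‖v‖ ^ 2)
  have hs : 0 < s := Real.sqrt_pos.2 (by nlinarith [norm_nonneg v])
  have hnorm : ‖euclideanAppend v (0 : EuclideanSpace ℝ (Fin M))‖ ^ 2 = ‖v‖ ^ 2 := by
    simp [norm_euclideanAppend_sq]
  have hsum : ∀ i, ∑ j, A i j * sphereLift (euclideanAppend v 0) j =
      s * chartFunctional A i (s⁻¹ • v) := fun i => by
    simp only [sphereLift, hnorm, sum_mul_euclideanAppend, chartFunctional_apply]
    simp only [PiLp.zero_apply, mul_zero, sum_const_zero, add_zero, Fin.sum_univ_one,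
      PiLp.single_eq_same, PiLp.smul_apply, smul_eq_mul, mul_add, mul_sum]
    field_simp
    rfl
  funext i
  simp [Phi, sgn, signsOf, signPattern, hsum, mul_nonneg_iff_of_pos_left hs]

end Chart

section HardModel

variable {k M : ℕ}

noncomputable def hardFeatures (r δ : ℝ) (p : Fin M → EuclideanSpace ℝ (Fin k))
    (z : EuclideanSpace ℝ (Fin k)) : EuclideanSpace ℝ (Fin (k + M)) :=
  euclideanAppend ((2 * r)⁻¹ • z) ((2 : ℝ)⁻¹ • tentVector p δ z)

noncomputable def hardModel (r δ : ℝ) (p : Fin M → EuclideanSpace ℝ (Fin k))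
    (z : EuclideanSpace ℝ (Fin k)) : EuclideanSpace ℝ (Fin (k + M + 1)) :=
  sphereLift (hardFeatures r δ p z)

variable {r δ : ℝ} {p : Fin M → EuclideanSpace ℝ (Fin k)}

lemma norm_inv_two_mul_smul_le (hr : 0 < r) {z : EuclideanSpace ℝ (Fin k)} (hz : ‖z‖ ≤ r) :
    ‖(2 * r)⁻¹ • z‖ ≤ 1 / 2 := by
  rw [norm_smul, Real.norm_of_nonneg (by positivity), inv_mul_le_iff₀ (by positivity)]
  linarith

lemma norm_hardFeatures_sq_le (hr : 0 < r) (hδ : 0 < δ)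
    (hp : Pairwise fun i j => 2 * δ ≤ dist (p i) (p j)) {z : EuclideanSpace ℝ (Fin k)}
    (hz : ‖z‖ ≤ r) : ‖hardFeatures r δ p z‖ ^ 2 ≤ 1 / 2 := by
  have h₁ := norm_inv_two_mul_smul_le hr hz
  have h₂ : ‖(2 : ℝ)⁻¹ • tentVector p δ z‖ ≤ 1 / 2 := by
    rw [norm_smul, Real.norm_of_nonneg (by norm_num)]
    linarith [norm_tentVector_le_one hδ hp z]
  rw [hardFeatures, norm_euclideanAppend_sq]
  nlinarith [norm_nonneg ((2 * r)⁻¹ • z), norm_nonneg ((2 : ℝ)⁻¹ • tentVector p δ z)]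

lemma norm_hardFeatures_sub_sq_le (hr : 0 < r) (hδ : 0 < δ)
    (hp : Pairwise fun i j => 2 * δ ≤ dist (p i) (p j)) (z z' : EuclideanSpace ℝ (Fin k)) :
    ‖hardFeatures r δ p z - hardFeatures r δ p z'‖ ^ 2 ≤
      (1 / (4 * r ^ 2) + 1 / (2 * δ ^ 2)) * ‖z - z'‖ ^ 2 := by
  have h := norm_tentVector_sub_sq_le hδ hp z z'
  rw [dist_eq_norm] at h
  rw [hardFeatures, hardFeatures, euclideanAppend_sub, norm_euclideanAppend_sq, ← smul_sub,
    ← smul_sub, norm_smul, norm_smul, mul_pow, mul_pow, Real.norm_of_nonneg (by positivity),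
    Real.norm_of_nonneg (by positivity)]
  calc ((2 * r)⁻¹) ^ 2 * ‖z - z'‖ ^ 2 + (2⁻¹) ^ 2 * ‖tentVector p δ z - tentVector p δ z'‖ ^ 2
      ≤ ((2 * r)⁻¹) ^ 2 * ‖z - z'‖ ^ 2 + (2⁻¹) ^ 2 * (2 * (‖z - z'‖ / δ) ^ 2) := by gcongr
    _ = _ := by field_simp; ring

lemma norm_hardModel (hr : 0 < r) (hδ : 0 < δ) (hp : Pairwise fun i j => 2 * δ ≤ dist (p i) (p j))
    {z : EuclideanSpace ℝ (Fin k)} (hz : ‖z‖ ≤ r) : ‖hardModel r δ p z‖ = 1 :=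
  norm_sphereLift <| (sq_le_one_iff₀ (norm_nonneg _)).1 <|
    (norm_hardFeatures_sq_le hr hδ hp hz).trans (by norm_num)

lemma norm_hardModel_sub_le (hr : 0 < r) (hδ : 0 < δ)
    (hp : Pairwise fun i j => 2 * δ ≤ dist (p i) (p j)) {z z' : EuclideanSpace ℝ (Fin k)}
    (hz : ‖z‖ ≤ r) (hz' : ‖z'‖ ≤ r) {L : ℝ} (hL : 0 ≤ L)
    (hLδ : 1 / (2 * r ^ 2) + 1 / δ ^ 2 ≤ L ^ 2) :
    ‖hardModel r δ p z - hardModel r δ p z'‖ ≤ L * ‖z - z'‖ := by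
  refine (sq_le_sq₀ (norm_nonneg _) (by positivity)).1 ?_
  calc ‖hardModel r δ p z - hardModel r δ p z'‖ ^ 2
      ≤ 2 * ‖hardFeatures r δ p z - hardFeatures r δ p z'‖ ^ 2 :=
        norm_sphereLift_sub_sq_le (norm_hardFeatures_sq_le hr hδ hp hz)
          (norm_hardFeatures_sq_le hr hδ hp hz')
    _ ≤ 2 * ((1 / (4 * r ^ 2) + 1 / (2 * δ ^ 2)) * ‖z - z'‖ ^ 2) := by
        gcongr
        exact norm_hardFeatures_sub_sq_le hr hδ hp z z'
    _ = (1 / (2 * r ^ 2) + 1 / δ ^ 2) * ‖z - z'‖ ^ 2 := by ring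
    _ ≤ (L * ‖z - z'‖) ^ 2 := by rw [mul_pow]; gcongr

lemma norm_sub_le_norm_hardModel_sub (hr : 0 < r) (z z' : EuclideanSpace ℝ (Fin k)) :
    ‖z - z'‖ ≤ 2 * r * ‖hardModel r δ p z - hardModel r δ p z'‖ := by
  have h : ‖(2 * r)⁻¹ • (z - z')‖ ≤ ‖hardFeatures r δ p z - hardFeatures r δ p z'‖ := by
    rw [hardFeatures, hardFeatures, euclideanAppend_sub, ← smul_sub]
    exact norm_le_norm_euclideanAppend_left _ _
  rw [norm_smul, Real.norm_of_nonneg (by positivity), inv_mul_le_iff₀ (by positivity)] at h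
  exact h.trans <| by
    gcongr
    exact norm_sub_le_norm_sphereLift_sub (hardFeatures r δ p z) (hardFeatures r δ p z')

lemma half_le_norm_hardModel_sub_sq (hδ : 0 < δ) (hp : Pairwise fun i j => δ ≤ dist (p i) (p j))
    {i j : Fin M} (hij : i ≠ j) :
    1 / 2 ≤ ‖hardModel r δ p (p i) - hardModel r δ p (p j)‖ ^ 2 := by
  have h := sq_add_sq_le_norm_sq (tentVector p δ (p i) - tentVector p δ (p j)) hij
  rw [PiLp.sub_apply, PiLp.sub_apply, tentVector_apply_self, tentVector_apply_self,
    tentVector_apply_eq_zero hδ (hp hij), tentVector_apply_eq_zero hδ (hp hij.symm)] at h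
  have h' : ‖(2 : ℝ)⁻¹ • (tentVector p δ (p i) - tentVector p δ (p j))‖ ≤
      ‖hardModel r δ p (p i) - hardModel r δ p (p j)‖ := by
    refine le_trans ?_ (norm_sub_le_norm_sphereLift_sub (hardFeatures r δ p (p i))
      (hardFeatures r δ p (p j)))
    rw [hardFeatures, hardFeatures, euclideanAppend_sub, ← smul_sub, ← smul_sub]
    exact norm_le_norm_euclideanAppend_right _ _
  rw [norm_smul, Real.norm_of_nonneg (by norm_num)] at h'
  nlinarith [norm_nonneg (tentVector p δ (p i) - tentVector p δ (p j))]

lemma Phi_hardModel_of_tentVector_eq_zero {m : ℕ} (A : Fin m → Fin (k + M + 1) → ℝ) (hr : 0 < r)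
    {z : EuclideanSpace ℝ (Fin k)} (hz : ‖z‖ ≤ r) (h₀ : tentVector p δ z = 0) :
    ∃ y, Phi A (hardModel r δ p z) = signsOf (signPattern (chartFunctional A) y) := by
  rw [hardModel, hardFeatures, h₀, smul_zero]
  exact ⟨_, Phi_sphereLift_euclideanAppend_zero A
    ((norm_inv_two_mul_smul_le hr hz).trans_lt (by norm_num))⟩

variable {m : ℕ} {A : Fin m → Fin (k + M + 1) → ℝ}
  {ψ : (Fin m → ℝ) → EuclideanSpace ℝ (Fin (k + M + 1))} {ε : ℝ}

lemma card_le_two_pow_of_hardModel (hδ : 0 < δ) (hp : Pairwise fun i j => δ ≤ dist (p i) (p j))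
    (hε : (2 * ε) ^ 2 < 1 / 2)
    (hψ : ∀ j, ‖hardModel r δ p (p j) - ψ (Phi A (hardModel r δ p (p j)))‖ ≤ ε) : M ≤ 2 ^ m :=
  card_le_two_pow_of_decoder hψ fun _ _ hij =>
    lt_of_pow_lt_pow_left₀ 2 (norm_nonneg _) (hε.trans_le (half_le_norm_hardModel_sub_sq hδ hp hij))

lemma card_le_sum_choose_of_hardModel (hr : 0 < r) (hδ : 0 < δ) {N : ℕ}
    {q : Fin N → EuclideanSpace ℝ (Fin k)} (hq : ∀ j, ‖q j‖ ≤ r) (hqp : ∀ i j, δ ≤ dist (q i) (p j))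
    (hqq : Pairwise fun i j => 4 * ε * r < dist (q i) (q j))
    (hψ : ∀ j, ‖hardModel r δ p (q j) - ψ (Phi A (hardModel r δ p (q j)))‖ ≤ ε) :
    N ≤ ∑ i ∈ range (k + 1), m.choose i := by
  choose y hy using fun j =>
    Phi_hardModel_of_tentVector_eq_zero A hr (hq j) (tentVector_eq_zero hδ (hqp j))
  have hsep : Pairwise fun i j => 2 * ε < ‖hardModel r δ p (q i) - hardModel r δ p (q j)‖ :=
    fun i j hij => by
      have := (hqq hij).trans_le <| (dist_eq_norm _ _).trans_le <|
        norm_sub_le_norm_hardModel_sub (δ := δ) (p := p) hr (q i) (q j)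
      nlinarith
  simpa using card_le_sum_choose_of_decoder (chartFunctional A) y hψ hsep hy

end HardModel

lemma sq_two_mul_lt_half {ε : ℝ} (hε : ε ∈ Set.Ioo (0 : ℝ) (√3 / (4 * √2))) :
    (2 * ε) ^ 2 < 1 / 2 := by
  have h := pow_lt_pow_left₀ ((lt_div_iff₀ (by positivity)).1 hε.2)
    (by have := hε.1; positivity) two_ne_zero
  rw [mul_pow, mul_pow, Real.sq_sqrt (by norm_num), Real.sq_sqrt (by norm_num)] at h
  nlinarith

lemma le_of_counting_bounds {k m : ℕ} {x ε : ℝ} (hk : 1 ≤ k) (hx : 256 ≤ x) (hε : 0 < ε)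
    (h₁ : (x / 16) ^ k ≤ 2 ^ m) (h₂ : (1 / (20 * ε)) ^ k ≤ ∑ i ∈ range (k + 1), (m.choose i : ℝ)) :
    1 / 60 * (k * Real.log x + k / ε) ≤ m := by
  have hk₀ : (0 : ℝ) < k := by exact_mod_cast hk
  have hlog₂ := Real.log_two_gt_d9
  have hlog₂' := Real.log_two_lt_d9
  have hlog₁₆ : Real.log 16 = 4 * Real.log 2 := by
    rw [show (16 : ℝ) = 2 ^ 4 by norm_num, Real.log_pow]; norm_num
  have hlogx : 8 * Real.log 2 ≤ Real.log x := calc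
    8 * Real.log 2 = Real.log 256 := by
      rw [show (256 : ℝ) = 2 ^ 8 by norm_num, Real.log_pow]; norm_num
    _ ≤ Real.log x := Real.log_le_log (by norm_num) hx
  have hlog : k * Real.log x ≤ 2 * m := by
    have := Real.log_le_log (by positivity) h₁
    rw [Real.log_pow, Real.log_pow, Real.log_div (by positivity) (by norm_num), hlog₁₆] at this
    nlinarith
  have hkm : k ≤ m := by
    have : (k : ℝ) ≤ m := by nlinarith
    exact_mod_cast this
  have hε' : k / ε ≤ 55 * m := by
    have := h₂.trans (sum_range_choose_le_exp_mul_div_pow hk hkm)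
    have := (pow_le_pow_iff_left₀ (by positivity) (by positivity) (by omega)).1 this
    rw [div_le_iff₀ hε]
    rw [div_le_div_iff₀ (by positivity) hk₀] at this
    nlinarith [mul_le_mul_of_nonneg_right Real.exp_one_lt_d9.le
      (mul_nonneg (Nat.cast_nonneg m) hε.le)]
  linarith

/-- Theorem 2, algorithm-independent lower bound: there is an
`L`-Lipschitz generative model on `B₂^k(r)` with range in the unit sphere such that
any measurement matrix and decoder achieving uniform error `ε` must use
`m ≥ c (k log(Lr) + k/ε)` measurements. -/
theorem stmt3 :
    ∃ C0 c : ℝ, 0 < C0 ∧ 0 < c ∧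
      ∀ (k : ℕ) (r L ε : ℝ),
        0 < r → L ≥ C0 / r → 2 ≤ k →
        ε ∈ Set.Ioo (0 : ℝ) (Real.sqrt 3 / (4 * Real.sqrt 2)) →
        ∃ (n : ℕ) (G : EuclideanSpace ℝ (Fin k) → EuclideanSpace ℝ (Fin n)),
          (∀ z ∈ Metric.closedBall (0 : EuclideanSpace ℝ (Fin k)) r,
            ∀ z' ∈ Metric.closedBall (0 : EuclideanSpace ℝ (Fin k)) r,
              ‖G z - G z'‖ ≤ L * ‖z - z'‖) ∧
          (∀ z ∈ Metric.closedBall (0 : EuclideanSpace ℝ (Fin k)) r, ‖G z‖ = 1) ∧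
          ∀ (m : ℕ) (A : Fin m → Fin n → ℝ)
            (ψ : (Fin m → ℝ) → EuclideanSpace ℝ (Fin n)),
            (∀ z ∈ Metric.closedBall (0 : EuclideanSpace ℝ (Fin k)) r,
              ‖G z - ψ (Phi A (G z))‖ ≤ ε) →
            (m : ℝ) ≥ c * ((k : ℝ) * Real.log (L * r) + (k : ℝ) / ε) := by
  refine ⟨256, 1 / 60, by norm_num, by norm_num, fun k r L ε hr hL hk hε => ?_⟩
  have hLr : 256 ≤ L * r := by rwa [ge_iff_le, div_le_iff₀ hr] at hL
  have hL₀ : 0 < L := pos_of_mul_pos_left (by linarith) hr.le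
  have hδ : 0 < 2 / L := by positivity
  have hε₀ := hε.1
  have : NeZero k := ⟨by omega⟩
  obtain ⟨M, N, p, q, hp, hq, hqp, hpp, hqq, hM, hN⟩ :=
    exists_two_separated_families (E := EuclideanSpace ℝ (Fin k)) (s₁ := 2 * (2 / L))
      (s₂ := 5 * ε * r) hr (by positivity) (by positivity)
  rw [finrank_euclideanSpace_fin] at hM hN
  refine ⟨k + M + 1, hardModel r (2 / L) p, fun z hz z' hz' => ?_, fun z hz => ?_,
    fun m A ψ hψ => ?_⟩
  · refine norm_hardModel_sub_le hr hδ hpp (mem_closedBall_zero_iff.1 hz)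
      (mem_closedBall_zero_iff.1 hz') hL₀.le ?_
    have : 1 / (2 * r ^ 2) ≤ L ^ 2 / 2 := by
      rw [div_le_div_iff₀ (by positivity) two_pos]; nlinarith
    linarith [show 1 / (2 / L) ^ 2 = L ^ 2 / 4 by field_simp; ring, sq_nonneg L]
  · exact norm_hardModel hr hδ hpp (mem_closedBall_zero_iff.1 hz)
  have h₁ := card_le_two_pow_of_hardModel hδ (fun _ _ h => (hpp h).trans' (by linarith))
    (sq_two_mul_lt_half hε) fun j => hψ _ (mem_closedBall_zero_iff.2 (hp j))
  have h₂ := card_le_sum_choose_of_hardModel hr hδ hq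
    (fun i j => (hqp i j).trans' <| by rw [div_le_div_iff₀ hL₀ two_pos]; nlinarith)
    (fun _ _ h => by nlinarith [hqq h]) fun j => hψ _ (mem_closedBall_zero_iff.2 (hq j))
  refine le_of_counting_bounds (by omega) hLr hε₀ ?_ ?_
  · calc (L * r / 16) ^ k = (r / (4 * (2 * (2 / L)))) ^ k := by field_simp; ring
      _ ≤ 2 ^ m := hM.trans (by exact_mod_cast h₁)
  · calc (1 / (20 * ε)) ^ k = (r / (4 * (5 * ε * r))) ^ k := by field_simp; ring
      _ ≤ _ := hN.trans (by exact_mod_cast h₂)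
end

section
/- There exists an absolute constant c > 0 such that the following holds. Let k ≥ 2 and let n be an integer multiple of k with n/k ≥ 2. Then there exists a finite subset C of {x ∈ S^{n-1} : x is k-group-sparse and x_n = 1/2} such that log|C| ≥ c·k·log(n/k) and ‖x − s‖₂² ≥ 3/8 for all distinct x, s ∈ C. -/
open MeasureTheory ProbabilityTheory

/-- A vector `x ∈ ℝ^{k·t}` is `k`-group-sparse if, dividing its coordinates into `k`
consecutive blocks of size `t`, each block contains at most one nonzero entry. -/
def GroupSparse (k t : ℕ) (x : Fin (k * t) → ℝ) : Prop :=
  ∀ i i' : Fin (k * t), (i : ℕ) / t = (i' : ℕ) / t → x i ≠ 0 → x i' ≠ 0 → i = i'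

/-!
Gilbert–Varshamov packing. Write `k = m + 1`. A word `f : Fin m → Fin t × Bool` (a position
and a sign in each of the first `m` blocks) is sent to the vector carrying `±√(3/(4m))` at the
chosen position of each of the first `m` blocks and `1/2` at the last coordinate; it is a
group-sparse unit vector, and two such vectors whose words differ in `δ` blocks are at squared
distance at least `3δ/(2m)`. A code of minimum Hamming distance `⌈m/4⌉` thus gives squared
distances `≥ 3/8`, and a maximal such code has at least `(2t)^m / (2^m (2t)^(⌈m/4⌉-1)) ≥ t^(k/2)`
words, since Hamming balls of radius `r` hold at most `2^m (2t)^r` words.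
-/

open Finset

section Hamming

variable {ι α : Type*} [Fintype ι] [DecidableEq ι] [Fintype α] [DecidableEq α]

theorem card_hammingDist_le_le [Nonempty α] (c : ι → α) (r : ℕ) :
    #{f | hammingDist f c ≤ r} ≤ 2 ^ Fintype.card ι * Fintype.card α ^ r := by
  set small : Finset (Finset ι) := {D | #D ≤ r}
  set agreeOff : Finset ι → Finset (ι → α) :=
    fun D => Fintype.piFinset fun i => if i ∈ D then univ else {c i}
  have h_sub : ({f | hammingDist f c ≤ r} : Finset (ι → α)) ⊆ small.biUnion agreeOff := by
    intro f hf
    simp only [mem_filter, mem_univ, true_and] at hf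
    refine mem_biUnion.2 ⟨({i | f i ≠ c i} : Finset ι), by simpa [small, hammingDist] using hf, ?_⟩
    simp only [agreeOff, Fintype.mem_piFinset]
    intro i
    by_cases h : f i = c i <;> simp [h]
  have h_card : ∀ D ∈ small, #(agreeOff D) ≤ Fintype.card α ^ r := fun D hD => by
    simp only [agreeOff, Fintype.card_piFinset, apply_ite card, card_univ, card_singleton,
      prod_ite_mem, univ_inter, prod_const]
    exact Nat.pow_le_pow_right Fintype.card_pos (mem_filter.1 hD).2
  calc #{f | hammingDist f c ≤ r}
      ≤ ∑ D ∈ small, #(agreeOff D) := (card_le_card h_sub).trans card_biUnion_le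
    _ ≤ #small * Fintype.card α ^ r := by simpa using sum_le_sum h_card
    _ ≤ 2 ^ Fintype.card ι * Fintype.card α ^ r := by
      gcongr
      simpa using card_filter_le (univ : Finset (Finset ι)) _

-- Gilbert–Varshamov: a largest code of minimum distance `d` covers everything within
-- distance `d - 1` of it.
theorem exists_code_card_mul_card_hammingBall_ge [Nonempty α] (d : ℕ) :
    ∃ C : Finset (ι → α), (∀ f ∈ C, ∀ g ∈ C, f ≠ g → d ≤ hammingDist f g) ∧
      Fintype.card α ^ Fintype.card ι ≤ #C * (2 ^ Fintype.card ι * Fintype.card α ^ (d - 1)) := by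
  set IsCode : Finset (ι → α) → Prop := fun C => ∀ f ∈ C, ∀ g ∈ C, f ≠ g → d ≤ hammingDist f g
  obtain ⟨C, hC_mem, hmax⟩ := exists_max_image {C | IsCode C} card
    ⟨∅, mem_filter.2 ⟨mem_univ _, by simp [IsCode]⟩⟩
  have hC : IsCode C := (mem_filter.1 hC_mem).2
  refine ⟨C, hC, ?_⟩
  have h_cover : (univ : Finset (ι → α)) ⊆ C.biUnion fun c => {f | hammingDist f c ≤ d - 1} := by
    intro f _
    by_contra h_far
    simp only [mem_biUnion, mem_filter, mem_univ, true_and, not_exists, not_and, not_le] at h_far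
    have hf : f ∉ C := fun hf => by simpa using h_far f hf
    have h_ins : IsCode (insert f C) := by
      intro a ha b hb hab
      rcases mem_insert.1 ha with rfl | haC <;> rcases mem_insert.1 hb with rfl | hbC
      · exact absurd rfl hab
      · have := h_far b hbC; omega
      · have := h_far a haC; rw [hammingDist_comm]; omega
      · exact hC a haC b hbC hab
    have := hmax _ (mem_filter.2 ⟨mem_univ _, h_ins⟩)
    rw [card_insert_of_notMem hf] at this
    omega
  calc Fintype.card α ^ Fintype.card ι = #(univ : Finset (ι → α)) := by simp
    _ ≤ ∑ c ∈ C, #{f | hammingDist f c ≤ d - 1} := (card_le_card h_cover).trans card_biUnion_le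
    _ ≤ #C * (2 ^ Fintype.card ι * Fintype.card α ^ (d - 1)) := by
      rw [← smul_eq_mul, ← sum_const]
      exact sum_le_sum fun c _ => card_hammingDist_le_le c (d - 1)

end Hamming

section Spike

variable {ι : Type*} [DecidableEq ι]

theorem eq_of_pi_single_apply_ne_zero {p j : ι} {v : ℝ} (h : (Pi.single p v : ι → ℝ) j ≠ 0) :
    j = p := by
  by_contra hj
  exact h (by simp [hj])

variable [Fintype ι]

theorem sum_pi_single_sq (p : ι) (v : ℝ) : ∑ j, Pi.single p v j ^ 2 = v ^ 2 := by
  simp [Pi.single_apply, ite_pow]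

theorem sum_sq_sub_pi_single (p p' : ι) (v v' : ℝ) :
    ∑ j, (Pi.single p v j - Pi.single p' v' j) ^ 2 =
      if p = p' then (v - v') ^ 2 else v ^ 2 + v' ^ 2 := by
  simp only [sub_sq, sum_add_distrib, sum_sub_distrib, sum_pi_single_sq]
  simp only [Pi.single_apply, eq_comm, mul_ite, mul_zero, ite_mul, zero_mul, sum_ite_eq, mem_univ,
    ↓reduceIte]
  split_ifs <;> ring

def signedSpike (a : ℝ) (s : ι × Bool) : ι → ℝ := Pi.single s.1 (if s.2 then a else -a)

theorem sum_signedSpike_sq (a : ℝ) (s : ι × Bool) : ∑ j, signedSpike a s j ^ 2 = a ^ 2 := by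
  rw [signedSpike, sum_pi_single_sq]
  split_ifs <;> ring

theorem two_mul_sq_le_sum_sq_sub_signedSpike (a : ℝ) {s s' : ι × Bool} (h : s ≠ s') :
    2 * a ^ 2 ≤ ∑ j, (signedSpike a s j - signedSpike a s' j) ^ 2 := by
  obtain ⟨p, σ⟩ := s
  obtain ⟨p', σ'⟩ := s'
  simp only [signedSpike, sum_sq_sub_pi_single]
  by_cases hp : p = p'
  · subst hp
    have hσ : σ ≠ σ' := fun hσ => h (hσ ▸ rfl)
    cases σ <;> cases σ' <;>
      simp only [ne_eq, not_true_eq_false, Bool.true_eq_false, Bool.false_eq_true,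
        not_false_eq_true, ↓reduceIte, sub_neg_eq_add] at hσ ⊢ <;>
      nlinarith [sq_nonneg a]
  · simp only [if_neg hp]
    split_ifs <;> nlinarith [sq_nonneg a]

end Spike

section Blocks

variable {k t : ℕ}

def blockVec (w : Fin k → Fin t → ℝ) : EuclideanSpace ℝ (Fin (k * t)) :=
  WithLp.toLp 2 fun i => w i.divNat i.modNat

@[simp]
theorem blockVec_apply (w : Fin k → Fin t → ℝ) (i : Fin (k * t)) :
    blockVec w i = w i.divNat i.modNat := rfl

theorem blockVec_sub (w w' : Fin k → Fin t → ℝ) : blockVec w - blockVec w' = blockVec (w - w') :=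
  rfl

@[simp]
theorem blockVec_finProdFinEquiv (w : Fin k → Fin t → ℝ) (p : Fin k × Fin t) :
    blockVec w (finProdFinEquiv p) = w p.1 p.2 :=
  congrArg (fun q : Fin k × Fin t => w q.1 q.2) (finProdFinEquiv.symm_apply_apply p)

theorem sq_norm_blockVec (w : Fin k → Fin t → ℝ) : ‖blockVec w‖ ^ 2 = ∑ b, ∑ j, w b j ^ 2 := by
  rw [EuclideanSpace.real_norm_sq_eq, ← Fintype.sum_prod_type', ← finProdFinEquiv.symm.sum_comp]
  rfl

theorem groupSparse_blockVec {w : Fin k → Fin t → ℝ}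
    (hw : ∀ b j j', w b j ≠ 0 → w b j' ≠ 0 → j = j') : GroupSparse k t (blockVec w) := by
  intro i i' h_div hi hi'
  have h_div : i.divNat = i'.divNat := Fin.ext h_div
  rw [blockVec_apply, h_div] at hi
  exact finProdFinEquiv.symm.injective (Prod.ext h_div (hw _ _ _ hi hi'))

end Blocks

section CodeVec

variable {m t : ℕ}

noncomputable def codeVec (a : ℝ) (f : Fin m → Fin (t + 1) × Bool) :
    EuclideanSpace ℝ (Fin ((m + 1) * (t + 1))) :=
  blockVec (Fin.snoc (α := fun _ => Fin (t + 1) → ℝ) (fun b => signedSpike a (f b))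
    (Pi.single (Fin.last t) (1 / 2)))

theorem sq_norm_codeVec (a : ℝ) (f : Fin m → Fin (t + 1) × Bool) :
    ‖codeVec a f‖ ^ 2 = m * a ^ 2 + 1 / 4 := by
  rw [codeVec, sq_norm_blockVec, Fin.sum_univ_castSucc]
  simp only [Fin.snoc_castSucc, Fin.snoc_last, sum_signedSpike_sq, sum_pi_single_sq, sum_const,
    card_univ, Fintype.card_fin, nsmul_eq_mul]
  norm_num

theorem codeVec_last (a : ℝ) (f : Fin m → Fin (t + 1) × Bool)
    (h : (m + 1) * (t + 1) - 1 < (m + 1) * (t + 1)) :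
    codeVec a f ⟨(m + 1) * (t + 1) - 1, h⟩ = 1 / 2 := by
  have : (⟨(m + 1) * (t + 1) - 1, h⟩ : Fin _) = finProdFinEquiv (Fin.last m, Fin.last t) := by
    ext
    simp only [finProdFinEquiv, Equiv.coe_fn_mk, Fin.val_last]
    ring_nf
    omega
  rw [this, codeVec, blockVec_finProdFinEquiv]
  simp

theorem groupSparse_codeVec (a : ℝ) (f : Fin m → Fin (t + 1) × Bool) :
    GroupSparse (m + 1) (t + 1) (codeVec a f) := by
  refine groupSparse_blockVec fun b j j' hj hj' => ?_
  induction b using Fin.lastCases with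
  | last =>
    simp only [Fin.snoc_last] at hj hj'
    exact (eq_of_pi_single_apply_ne_zero hj).trans (eq_of_pi_single_apply_ne_zero hj').symm
  | cast b =>
    simp only [Fin.snoc_castSucc, signedSpike] at hj hj'
    exact (eq_of_pi_single_apply_ne_zero hj).trans (eq_of_pi_single_apply_ne_zero hj').symm

theorem two_mul_sq_mul_hammingDist_le (a : ℝ) (f g : Fin m → Fin (t + 1) × Bool) :
    2 * a ^ 2 * hammingDist f g ≤ ‖codeVec a f - codeVec a g‖ ^ 2 := by
  rw [codeVec, codeVec, blockVec_sub, sq_norm_blockVec, Fin.sum_univ_castSucc]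
  simp only [Pi.sub_apply, Fin.snoc_castSucc, Fin.snoc_last, sub_self, ne_eq,
    OfNat.ofNat_ne_zero, not_false_eq_true, zero_pow, sum_const_zero, add_zero]
  calc 2 * a ^ 2 * (hammingDist f g : ℝ) = ∑ b, if f b ≠ g b then 2 * a ^ 2 else 0 := by
        simp [hammingDist, sum_ite, mul_comm]
    _ ≤ _ := sum_le_sum fun b _ => by
        split_ifs with h
        · exact two_mul_sq_le_sum_sq_sub_signedSpike a h
        · positivity

-- The `m` signed spikes carry total mass `3/4`, the last block `1/4`.
theorem norm_codeVec_sqrt (hm : 0 < m) (f : Fin m → Fin (t + 1) × Bool) :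
    ‖codeVec √(3 / (4 * m)) f‖ = 1 := by
  have h := sq_norm_codeVec (√(3 / (4 * m))) f
  have hm : (m : ℝ) ≠ 0 := by positivity
  rw [Real.sq_sqrt (by positivity),
    show (m : ℝ) * (3 / (4 * m)) + 1 / 4 = 1 by field_simp; norm_num] at h
  exact (pow_eq_one_iff_of_nonneg (norm_nonneg _) two_ne_zero).1 h

theorem three_div_eight_le_sq_norm_codeVec_sub (hm : 0 < m) {f g : Fin m → Fin (t + 1) × Bool}
    (h : m ≤ 4 * hammingDist f g) :
    3 / 8 ≤ ‖codeVec √(3 / (4 * m)) f - codeVec √(3 / (4 * m)) g‖ ^ 2 := by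
  refine le_trans ?_ (two_mul_sq_mul_hammingDist_le _ f g)
  have hm : (0 : ℝ) < m := by exact_mod_cast hm
  have h : (m : ℝ) ≤ 4 * hammingDist f g := by exact_mod_cast h
  rw [Real.sq_sqrt (by positivity)]
  calc (3 / 8 : ℝ) = 2 * (3 / (4 * m)) * (m / 4) := by field_simp; ring
    _ ≤ 2 * (3 / (4 * m)) * hammingDist f g := by gcongr; linarith

end CodeVec

theorem mul_log_le_log_of_pow_le {q e N : ℕ} (hq : 0 < q) (h : q ^ e ≤ N) :
    e * Real.log q ≤ Real.log N := by
  rw [← Real.log_pow]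
  exact Real.log_le_log (by positivity) (by exact_mod_cast h)

theorem pow_sub_two_mul_le_of_pow_le {q n r N : ℕ} (hq : 2 ≤ q) (hr : 2 * r ≤ n)
    (h : (2 * q) ^ n ≤ N * (2 ^ n * (2 * q) ^ r)) : q ^ (n - 2 * r) ≤ N := by
  have h₁ : q ^ n ≤ N * (2 * q) ^ r := by
    rw [mul_pow, mul_left_comm] at h
    exact Nat.le_of_mul_le_mul_left h (by positivity)
  have h₂ : (2 * q) ^ r ≤ q ^ (2 * r) := by
    rw [pow_mul]
    exact Nat.pow_le_pow_left (by nlinarith) r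
  have h₃ : q ^ (n - 2 * r) * q ^ (2 * r) ≤ N * q ^ (2 * r) := by
    rw [← pow_add, Nat.sub_add_cancel hr]
    exact h₁.trans (Nat.mul_le_mul_left N h₂)
  exact Nat.le_of_mul_le_mul_right h₃ (by positivity)

/-- Gilbert–Varshamov packing of group-sparse unit vectors: for `k ≥ 2`
and `n = k·t` with `t = n/k ≥ 2`, there is a set `C` of `k`-group-sparse unit vectors with
last coordinate `1/2`, with `log|C| ≥ c·k·log(n/k)` and pairwise squared distance `≥ 3/8`. -/
theorem stmt14 :
    ∃ c : ℝ, 0 < c ∧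
      ∀ (k t : ℕ) (hk : 2 ≤ k) (ht : 2 ≤ t),
        ∃ C : Finset (EuclideanSpace ℝ (Fin (k * t))),
          (∀ x ∈ C, ‖x‖ = 1 ∧ GroupSparse k t x ∧
            x ⟨k * t - 1, Nat.sub_lt (Nat.mul_pos (by omega) (by omega)) one_pos⟩ = 1 / 2) ∧
          Real.log (C.card : ℝ) ≥ c * (k : ℝ) * Real.log (t : ℝ) ∧
          ∀ x ∈ C, ∀ s ∈ C, x ≠ s → ‖x - s‖ ^ 2 ≥ 3 / 8 := by
  refine ⟨1 / 2, by norm_num, fun k t hk ht => ?_⟩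
  obtain ⟨m, rfl⟩ : ∃ m, k = m + 1 := ⟨k - 1, by omega⟩
  obtain ⟨t, rfl⟩ : ∃ n, t = n + 1 := ⟨t - 1, by omega⟩
  have hm : 0 < m := by omega
  set x := codeVec (t := t) √(3 / (4 * m))
  -- minimum distance `⌈m/4⌉`
  obtain ⟨C, hC_dist, hC_card⟩ :=
    exists_code_card_mul_card_hammingBall_ge (ι := Fin m) (α := Fin (t + 1) × Bool) ((m + 3) / 4)
  have h_sep : ∀ f ∈ C, ∀ g ∈ C, f ≠ g → 3 / 8 ≤ ‖x f - x g‖ ^ 2 := fun f hf g hg hfg =>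
    three_div_eight_le_sq_norm_codeVec_sub hm (by have := hC_dist f hf g hg hfg; omega)
  have h_inj : Set.InjOn x C := fun f hf g hg hfg => by
    by_contra hne
    have := h_sep f hf g hg hne
    rw [hfg, sub_self, norm_zero] at this
    norm_num at this
  have h_card : (t + 1) ^ (m - 2 * ((m + 3) / 4 - 1)) ≤ #(C.image x) := by
    rw [card_image_of_injOn h_inj]
    refine pow_sub_two_mul_le_of_pow_le (by omega) (by omega) ?_
    simpa [Fintype.card_prod, mul_comm] using hC_card
  refine ⟨C.image x, ?_, ?_, ?_⟩
  · simp only [mem_image]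
    rintro _ ⟨f, -, rfl⟩
    exact ⟨norm_codeVec_sqrt hm f, groupSparse_codeVec _ f, codeVec_last _ f _⟩
  · refine le_trans ?_ (mul_log_le_log_of_pow_le (by omega) h_card)
    gcongr
    rw [one_div_mul_eq_div, div_le_iff₀ two_pos]
    exact_mod_cast (by omega : m + 1 ≤ (m - 2 * ((m + 3) / 4 - 1)) * 2)
  · simp only [mem_image]
    rintro _ ⟨f, hf, rfl⟩ _ ⟨g, hg, rfl⟩ hne
    exact h_sep f hf g hg (ne_of_apply_ne x hne)
end

section
/- Let m ≥ 2k and let V be a k-dimensional linear subspace of ℝ^m. Then the number of (open) orthants of ℝ^m intersected by V is at most 2^k · binom(m, k); equivalently, the cardinality of the set { σ ∈ {−1,1}^m : ∃ v ∈ V with σ_i · v_i > 0 for all i ∈ {1,…,m} } is at most 2^k · binom(m, k). -/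
open MeasureTheory ProbabilityTheory

/-!
Induct on `m`. Forgetting the last coordinate sends the sign patterns of `V` to those of its
projection `V'`, and a pattern `τ` of `V'` lifts with both last signs only if it is a pattern of
the projection of the hyperplane section `V ∩ {v_last = 0}`: the two witnesses combine into one
whose last coordinate cancels. The section has dimension `k - 1` and `V'` has dimension `k` or
`k - 1`, so the counts satisfy `c(m + 1, k) ≤ (c(m, k) + c(m, k - 1)) + c(m, k - 1)`, and
`2 ^ k * C(m, k)` obeys this recursion with equality by Pascal's rule.
-/

open Module LinearMap

theorem Submodule.finrank_map_add_finrank_inf_ker {K M N : Type*} [DivisionRing K]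
    [AddCommGroup M] [Module K M] [AddCommGroup N] [Module K N]
    (f : M →ₗ[K] N) (p : Submodule K M) [FiniteDimensional K p] :
    finrank K (p.map f) + finrank K ↥(p ⊓ ker f) = finrank K p := by
  rw [← (f.domRestrict p).finrank_range_add_finrank_ker, range_domRestrict, ker_domRestrict,
    ← Submodule.finrank_map_subtype_eq, Submodule.map_comap_subtype]

theorem Submodule.finrank_inf_ker_add_one {K M : Type*} [DivisionRing K]
    [AddCommGroup M] [Module K M] (φ : M →ₗ[K] K) (p : Submodule K M) [FiniteDimensional K p]
    (hp : ¬ p ≤ ker φ) :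
    finrank K ↥(p ⊓ ker φ) + 1 = finrank K p := by
  have hmap : finrank K (p.map φ) = 1 := by
    refine le_antisymm ((Submodule.finrank_le _).trans (finrank_self K).le) ?_
    rwa [Nat.one_le_iff_ne_zero, Ne, Submodule.finrank_eq_zero, ← le_ker_iff_map]
  rw [← Submodule.finrank_map_add_finrank_inf_ker φ p, hmap, add_comm]

section OrthantSigns

variable {𝕜 : Type*} [Field 𝕜]

def dropLast (m : ℕ) : (Fin (m + 1) → 𝕜) →ₗ[𝕜] (Fin m → 𝕜) :=
  funLeft 𝕜 𝕜 Fin.castSucc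

theorem finrank_map_dropLast_inf_ker {m : ℕ} (V : Submodule 𝕜 (Fin (m + 1) → 𝕜)) :
    finrank 𝕜 ((V ⊓ ker (proj (Fin.last m))).map (dropLast m)) =
      finrank 𝕜 ↥(V ⊓ ker (proj (Fin.last m))) := by
  have hdisj : V ⊓ ker (proj (Fin.last m)) ⊓ ker (dropLast m) = ⊥ := by
    refine eq_bot_iff.mpr fun v ⟨⟨_, hlast⟩, hinit⟩ => ?_
    ext i
    refine Fin.lastCases hlast (fun j => ?_) i
    exact congr_fun (hinit : Fin.init v = 0) j
  have h := Submodule.finrank_map_add_finrank_inf_ker (dropLast m) (V ⊓ ker (proj (Fin.last m)))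
  rwa [hdisj, finrank_bot, add_zero] at h

variable [LinearOrder 𝕜] {m : ℕ}

def orthantSigns (V : Submodule 𝕜 (Fin m → 𝕜)) : Set (Fin m → 𝕜) :=
  {σ | (∀ i, σ i = 1 ∨ σ i = -1) ∧ ∃ v ∈ V, ∀ i, σ i * v i > 0}

theorem orthantSigns_finite (V : Submodule 𝕜 (Fin m → 𝕜)) : (orthantSigns V).Finite := by
  refine (Set.Finite.pi (t := fun _ => ({1, -1} : Set 𝕜)) fun _ => by simp).subset ?_
  intro σ hσ i _
  rcases hσ.1 i with h | h <;> simp [h]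

theorem orthantSigns_eq_empty_of_le_ker {V : Submodule 𝕜 (Fin m → 𝕜)} (i : Fin m)
    (hV : V ≤ ker (proj i)) : orthantSigns V = ∅ := by
  refine Set.eq_empty_of_forall_notMem fun σ ⟨_, v, hv, hpos⟩ => ?_
  have hvi : v i = 0 := hV hv
  simpa [hvi] using hpos i

theorem init_mem_orthantSigns_map (V : Submodule 𝕜 (Fin (m + 1) → 𝕜)) {σ : Fin (m + 1) → 𝕜}
    (hσ : σ ∈ orthantSigns V) : Fin.init σ ∈ orthantSigns (V.map (dropLast m)) := by
  obtain ⟨hsign, v, hv, hpos⟩ := hσ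
  exact ⟨fun i => hsign i.castSucc, Fin.init v, ⟨v, hv, rfl⟩, fun i => hpos i.castSucc⟩

theorem mem_orthantSigns_map_inf_ker [IsStrictOrderedRing 𝕜] (V : Submodule 𝕜 (Fin (m + 1) → 𝕜))
    {τ : Fin m → 𝕜} (hplus : Fin.snoc τ 1 ∈ orthantSigns V)
    (hminus : Fin.snoc τ (-1) ∈ orthantSigns V) :
    τ ∈ orthantSigns ((V ⊓ ker (proj (Fin.last m))).map (dropLast m)) := by
  obtain ⟨hsign, p, hp, hppos⟩ := hplus
  obtain ⟨-, q, hq, hqpos⟩ := hminus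
  have hp_last : 0 < p (Fin.last m) := by simpa using hppos (Fin.last m)
  have hq_last : q (Fin.last m) < 0 := by simpa using hqpos (Fin.last m)
  set w := (-q (Fin.last m)) • p + p (Fin.last m) • q
  have hw : w ∈ V ⊓ ker (proj (Fin.last m)) := by
    refine ⟨V.add_mem (V.smul_mem _ hp) (V.smul_mem _ hq), ?_⟩
    simp only [SetLike.mem_coe, mem_ker, proj_apply, w, Pi.add_apply, Pi.smul_apply, smul_eq_mul]
    ring
  refine ⟨fun i => by simpa using hsign i.castSucc, Fin.init w, ⟨w, hw, rfl⟩, fun i => ?_⟩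
  have hpi : 0 < τ i * p i.castSucc := by simpa using hppos i.castSucc
  have hqi : 0 < τ i * q i.castSucc := by simpa using hqpos i.castSucc
  simp only [Fin.init, w, Pi.add_apply, Pi.smul_apply, smul_eq_mul]
  nlinarith

theorem ncard_orthantSigns_le_add [IsStrictOrderedRing 𝕜] (V : Submodule 𝕜 (Fin (m + 1) → 𝕜)) :
    (orthantSigns V).ncard ≤ (orthantSigns (V.map (dropLast m))).ncard +
      (orthantSigns ((V ⊓ ker (proj (Fin.last m))).map (dropLast m))).ncard := by
  set S := orthantSigns V
  set P := {τ : Fin m → 𝕜 | Fin.snoc τ 1 ∈ S}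
  set Q := {τ : Fin m → 𝕜 | Fin.snoc τ (-1) ∈ S}
  have hP : P ⊆ orthantSigns (V.map (dropLast m)) := fun τ h => by
    simpa using init_mem_orthantSigns_map V h
  have hQ : Q ⊆ orthantSigns (V.map (dropLast m)) := fun τ h => by
    simpa using init_mem_orthantSigns_map V h
  have hPfin : P.Finite := (orthantSigns_finite _).subset hP
  have hQfin : Q.Finite := (orthantSigns_finite _).subset hQ
  have hS : S ⊆ (Fin.snoc · 1) '' P ∪ (Fin.snoc · (-1)) '' Q := by
    intro σ hσ
    rcases hσ.1 (Fin.last m) with h | h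
    · exact Or.inl ⟨Fin.init σ, by simpa [P, ← h] using hσ, by simp [← h]⟩
    · exact Or.inr ⟨Fin.init σ, by simpa [Q, ← h] using hσ, by simp [← h]⟩
  calc S.ncard ≤ ((Fin.snoc · 1) '' P ∪ (Fin.snoc · (-1)) '' Q).ncard :=
        Set.ncard_le_ncard hS ((hPfin.image _).union (hQfin.image _))
    _ ≤ P.ncard + Q.ncard :=
        (Set.ncard_union_le _ _).trans (add_le_add (Set.ncard_image_le hPfin)
          (Set.ncard_image_le hQfin))
    _ = (P ∪ Q).ncard + (P ∩ Q).ncard := (Set.ncard_union_add_ncard_inter P Q hPfin hQfin).symm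
    _ ≤ _ := add_le_add (Set.ncard_le_ncard (Set.union_subset hP hQ) (orthantSigns_finite _))
        (Set.ncard_le_ncard (fun τ h => mem_orthantSigns_map_inf_ker V h.1 h.2)
          (orthantSigns_finite _))

theorem ncard_orthantSigns_le [IsStrictOrderedRing 𝕜] (V : Submodule 𝕜 (Fin m → 𝕜)) :
    (orthantSigns V).ncard ≤ 2 ^ finrank 𝕜 V * m.choose (finrank 𝕜 V) := by
  induction m with
  | zero =>
    have hV : finrank 𝕜 V = 0 := Nat.eq_zero_of_le_zero
      ((Submodule.finrank_le V).trans_eq (finrank_fin_fun 𝕜))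
    simpa [hV] using Set.ncard_le_one_of_subsingleton (orthantSigns V)
  | succ m ih =>
    by_cases hV : V ≤ ker (proj (Fin.last m))
    · simp [orthantSigns_eq_empty_of_le_ker _ hV]
    set W := V ⊓ ker (proj (Fin.last m))
    have hW : finrank 𝕜 W + 1 = finrank 𝕜 V := Submodule.finrank_inf_ker_add_one _ V hV
    have hVmap : finrank 𝕜 (V.map (dropLast m)) = finrank 𝕜 W ∨
        finrank 𝕜 (V.map (dropLast m)) = finrank 𝕜 W + 1 := by
      have hlower : finrank 𝕜 W ≤ finrank 𝕜 (V.map (dropLast m)) :=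
        (finrank_map_dropLast_inf_ker V).symm.le.trans
          (Submodule.finrank_mono (Submodule.map_mono inf_le_left))
      have hupper := Submodule.finrank_map_le (dropLast m) V
      omega
    rw [← hW]
    set j := finrank 𝕜 W
    calc (orthantSigns V).ncard
        ≤ (orthantSigns (V.map (dropLast m))).ncard + (orthantSigns (W.map (dropLast m))).ncard :=
          ncard_orthantSigns_le_add V
      _ ≤ (2 ^ j * m.choose j + 2 ^ (j + 1) * m.choose (j + 1)) + 2 ^ j * m.choose j := by
          refine add_le_add ((ih _).trans ?_)
            ((ih _).trans_eq (by rw [finrank_map_dropLast_inf_ker]))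
          rcases hVmap with h | h <;> rw [h]
          exacts [Nat.le_add_right _ _, Nat.le_add_left _ _]
      _ = 2 ^ (j + 1) * (m + 1).choose (j + 1) := by rw [Nat.choose_succ_succ']; ring

end OrthantSigns

theorem stmt18_general (m k : ℕ) (V : Submodule ℝ (Fin m → ℝ))
    (hV : Module.finrank ℝ V = k) :
    Set.ncard {σ : Fin m → ℝ |
        (∀ i, σ i = 1 ∨ σ i = -1) ∧ ∃ v ∈ V, ∀ i, σ i * v i > 0}
      ≤ 2 ^ k * Nat.choose m k :=
  hV ▸ ncard_orthantSigns_le V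

/-- Lemma 13, orthant counting: for `m ≥ 2k`, a `k`-dimensional linear
subspace of `ℝ^m` intersects at most `2^k · C(m,k)` open orthants. -/
theorem stmt18 (m k : ℕ) (hmk : 2 * k ≤ m) (V : Submodule ℝ (Fin m → ℝ))
    (hV : Module.finrank ℝ V = k) :
    Set.ncard {σ : Fin m → ℝ |
        (∀ i, σ i = 1 ∨ σ i = -1) ∧ ∃ v ∈ V, ∀ i, σ i * v i > 0}
      ≤ 2 ^ k * Nat.choose m k :=
  stmt18_general m k V hV
end

section
/- Fix x ∈ S^{n-1} and σ > 0. Let A ∈ ℝ^{m×n} have i.i.d. N(0,1) entries and let ξ ∼ N(0, σ² I_m) be independent of A. Then for any γ > 0, P( d_H( sign(Ax), sign(Ax + ξ) ) > σ/2 + γ ) ≤ e^{−2 m γ²}. -/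
open MeasureTheory ProbabilityTheory

/-!
Put `gᵢ = ⟨aᵢ, x⟩`. Since `‖x‖ = 1`, the pairs `(gᵢ, ξᵢ)` are i.i.d. with `gᵢ ∼ N(0,1)` and
`ξᵢ ∼ N(0,σ²)`, so the number of sign flips is a sum of `m` i.i.d. Bernoulli(`p`) variables
and, by Hoeffding's inequality, exceeds `m (p + γ)` with probability at most `e^{-2mγ²}`.
A flip at `i` forces `gᵢ` to lie between `0` and `-ξᵢ`, which for fixed `ξᵢ` has probability
at most `|ξᵢ| / √(2π)`; since `E|ξᵢ| ≤ σ`, the flip probability is `p ≤ σ / √(2π) ≤ σ / 2`.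
-/

open Real Set
open scoped NNReal

lemma measurable_sgn : Measurable sgn :=
  Measurable.ite measurableSet_Ici measurable_const measurable_const

lemma setOf_sgn_ne_sgn_add_subset_uIcc (s : ℝ) :
    {g : ℝ | sgn g ≠ sgn (g + s)} ⊆ uIcc 0 (-s) := by
  intro g hg
  simp only [mem_ofPred_eq, sgn] at hg
  rw [mem_uIcc]
  split_ifs at hg <;>
    first
    | exact absurd rfl hg
    | exact Or.inl ⟨by linarith, by linarith⟩
    | exact Or.inr ⟨by linarith, by linarith⟩

lemma gaussianPDFReal_le (μ : ℝ) (v : ℝ≥0) (x : ℝ) :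
    gaussianPDFReal μ v x ≤ (√(2 * π * v))⁻¹ := by
  rw [gaussianPDFReal]
  refine mul_le_of_le_one_right (by positivity) (exp_le_one_iff.2 ?_)
  exact div_nonpos_of_nonpos_of_nonneg (neg_nonpos.2 (sq_nonneg _)) (by positivity)

lemma gaussianReal_le_mul_volume (μ : ℝ) {v : ℝ≥0} (hv : v ≠ 0) (s : Set ℝ) :
    gaussianReal μ v s ≤ ENNReal.ofReal (√(2 * π * v))⁻¹ * volume s := by
  rw [gaussianReal_apply μ hv, ← setLIntegral_const]
  exact lintegral_mono fun x => ENNReal.ofReal_le_ofReal (gaussianPDFReal_le μ v x)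

lemma integral_abs_gaussianReal_le (v : ℝ≥0) : ∫ s, |s| ∂gaussianReal 0 v ≤ √v := by
  have h2 : MemLp id 2 (gaussianReal 0 v) := memLp_id_gaussianReal 2
  have habs : Var[|id|; gaussianReal 0 v]
      = ∫ s, s ^ 2 ∂gaussianReal 0 v - (∫ s, |s| ∂gaussianReal 0 v) ^ 2 := by
    simpa using variance_eq_sub h2.abs
  have hid : (v : ℝ) = ∫ s, s ^ 2 ∂gaussianReal 0 v := by
    simpa [integral_id_gaussianReal] using variance_eq_sub h2
  refine Real.le_sqrt_of_sq_le ?_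
  linarith [variance_nonneg |id| (gaussianReal 0 v)]

lemma measurableSet_sgn_ne_sgn_add : MeasurableSet {z : ℝ × ℝ | sgn z.1 ≠ sgn (z.1 + z.2)} :=
  (measurableSet_eq_fun (measurable_sgn.comp measurable_fst)
    (measurable_sgn.comp (measurable_fst.add measurable_snd))).compl

lemma gaussianReal_sgn_ne_sgn_add_le (s : ℝ) :
    gaussianReal 0 1 {g | sgn g ≠ sgn (g + s)} ≤ ENNReal.ofReal (|s| / √(2 * π)) := by
  calc gaussianReal 0 1 {g | sgn g ≠ sgn (g + s)}
      ≤ gaussianReal 0 1 (uIcc 0 (-s)) := measure_mono (setOf_sgn_ne_sgn_add_subset_uIcc s)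
    _ ≤ ENNReal.ofReal (√(2 * π * (1 : ℝ≥0)))⁻¹ * volume (uIcc 0 (-s)) :=
        gaussianReal_le_mul_volume 0 one_ne_zero _
    _ = ENNReal.ofReal (|s| / √(2 * π)) := by
        rw [Real.volume_interval, ← ENNReal.ofReal_mul (by positivity)]
        simp [div_eq_inv_mul]

lemma measure_sgn_ne_sgn_add_le (v : ℝ≥0) :
    ((gaussianReal 0 1).prod (gaussianReal 0 v)) {z : ℝ × ℝ | sgn z.1 ≠ sgn (z.1 + z.2)}
      ≤ ENNReal.ofReal (√v / 2) := by
  have h2π : 2 ≤ √(2 * π) := Real.le_sqrt_of_sq_le (by nlinarith [Real.pi_gt_three])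
  rw [Measure.prod_apply_symm measurableSet_sgn_ne_sgn_add]
  calc ∫⁻ s, gaussianReal 0 1 {g | sgn g ≠ sgn (g + s)} ∂gaussianReal 0 v
      ≤ ∫⁻ s, ENNReal.ofReal (|s| / √(2 * π)) ∂gaussianReal 0 v :=
        lintegral_mono gaussianReal_sgn_ne_sgn_add_le
    _ = ENNReal.ofReal (∫ s, |s| / √(2 * π) ∂gaussianReal 0 v) :=
        (ofReal_integral_eq_lintegral_ofReal
          (((memLp_id_gaussianReal 1).integrable le_rfl).abs.div_const _)
          (ae_of_all _ fun s => by positivity)).symm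
    _ ≤ ENNReal.ofReal (√v / 2) := by
        rw [integral_div]
        gcongr
        exact integral_abs_gaussianReal_le v

lemma map_pi_gaussianReal_sum_mul {ι : Type*} [Fintype ι] (x : EuclideanSpace ℝ ι) :
    (Measure.pi fun _ : ι => gaussianReal 0 1).map (fun a => ∑ j, a j * x j)
      = gaussianReal 0 (‖x‖ ^ 2).toNNReal := by
  have hfun : (fun a : ι → ℝ => ∑ j, a j * x j) = innerSL ℝ x ∘ WithLp.toLp 2 := by
    ext a
    simp [PiLp.inner_apply, mul_comm]
  rw [hfun, ← Measure.map_map (by fun_prop) (by fun_prop), map_pi_eq_stdGaussian,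
    IsGaussian.map_eq_gaussianReal, integral_strongDual_stdGaussian, variance_dual_stdGaussian,
    innerSL_apply_norm]

lemma map_prod_pi_eq_pi_prod {ι α β γ : Type*} [Fintype ι] [MeasurableSpace α]
    [MeasurableSpace β] [MeasurableSpace γ] (μ : Measure α) (ν : Measure β)
    [IsFiniteMeasure μ] [IsFiniteMeasure ν] {f : α → γ} (hf : Measurable f) :
    ((Measure.pi fun _ : ι => μ).prod (Measure.pi fun _ : ι => ν)).map
        (fun p i => (f (p.1 i), p.2 i))
      = Measure.pi fun _ : ι => (μ.map f).prod ν := by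
  rw [← (measurePreserving_arrowProdEquivProdArrow α β ι (fun _ => μ) (fun _ => ν)).map_eq,
    Measure.map_map (by fun_prop) (MeasurableEquiv.measurable _)]
  have := Measure.pi_map_pi (μ := fun _ : ι => μ.prod ν) (f := fun _ => Prod.map f id)
    (fun _ => (hf.prodMap measurable_id).aemeasurable)
  simp only [← Measure.map_prod_map μ ν hf measurable_id, Measure.map_id] at this
  exact this

lemma measureReal_pi_sum_indicator_ge_le {ι E : Type*} [Fintype ι] [MeasurableSpace E]
    (μ : Measure E) [IsProbabilityMeasure μ] {A : Set E} (hA : MeasurableSet A) {p γ : ℝ}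
    (hp : μ.real A ≤ p) (hγ : 0 ≤ γ) :
    (Measure.pi fun _ : ι => μ).real
        {ω | Fintype.card ι * (p + γ) ≤ ∑ i, A.indicator 1 (ω i)}
      ≤ exp (-(2 * Fintype.card ι * γ ^ 2)) := by
  set k : ℝ := (Fintype.card ι : ℝ)
  set X : E → ℝ := fun e => A.indicator 1 e - μ.real A
  have hX : HasSubgaussianMGF X (1 / 4) μ := by
    have := hasSubgaussianMGF_of_mem_Icc (μ := μ) (X := A.indicator 1) (a := 0) (b := 1)
      (measurable_const.indicator hA).aemeasurable
      (ae_of_all _ fun e => ⟨Set.indicator_nonneg (fun _ _ => zero_le_one) e,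
        Set.indicator_le_self' (fun _ _ => zero_le_one) e⟩)
    convert this using 1
    · simp [X, integral_indicator_one hA]
    · norm_num
  have hsub : {ω : ι → E | k * (p + γ) ≤ ∑ i, A.indicator 1 (ω i)}
      ⊆ {ω | k * γ ≤ ∑ i, X (ω i)} := by
    intro ω hω
    simp only [mem_ofPred_eq, X, Finset.sum_sub_distrib, Finset.sum_const, Finset.card_univ,
      nsmul_eq_mul] at hω ⊢
    nlinarith [(Fintype.card ι).cast_nonneg (α := ℝ)]
  have hoeffding := HasSubgaussianMGF.measure_sum_ge_le_of_iIndepFun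
    (s := Finset.univ) (ε := k * γ)
    (iIndepFun_pi (μ := fun _ : ι => μ) (X := fun _ => X) fun _ => hX.aemeasurable)
    (fun i _ => HasSubgaussianMGF.of_map (measurable_pi_apply i).aemeasurable
      (by rwa [(measurePreserving_eval (fun _ : ι => μ) i).map_eq])) (by positivity)
  have hvar : -(k * γ) ^ 2 / (2 * ((∑ _ : ι, (1 / 4 : ℝ≥0) : ℝ≥0) : ℝ)) = -(2 * k * γ ^ 2) := by
    have hsum : ((∑ _ : ι, (1 / 4 : ℝ≥0) : ℝ≥0) : ℝ) = k / 4 := by simp [k, div_eq_mul_inv]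
    rw [hsum]
    rcases eq_or_ne k 0 with hk | hk
    · simp [hk]
    · field_simp; ring
  calc _ ≤ _ := measureReal_mono hsub
    _ ≤ _ := hoeffding
    _ = _ := by rw [hvar]

lemma natCast_mul_dH {m : ℕ} (v v' : Fin m → ℝ) :
    (m : ℝ) * dH v v' = (Finset.univ.filter fun i => v i ≠ v' i).card := by
  rcases Nat.eq_zero_or_pos m with rfl | hm
  · simp
  · exact mul_div_cancel₀ _ (Nat.cast_ne_zero.2 hm.ne')

/-- Lemma 4 of Jacques et al.: for a fixed unit vector `x`, an i.i.d.
`N(0,1)` matrix `A`, and independent Gaussian noise `ξ ~ N(0, σ²I_m)`, the fraction of sign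
flips caused by the noise exceeds `σ/2 + γ` with probability at most `e^{−2mγ²}`. -/
theorem stmt19 (n m : ℕ) (x : EuclideanSpace ℝ (Fin n)) (hx : ‖x‖ = 1)
    (σ : ℝ) (hσ : 0 < σ) (γ : ℝ) (hγ : 0 < γ) :
    (gaussianMatrix m n).prod
        (Measure.pi fun _ : Fin m => gaussianReal 0 ((σ ^ 2).toNNReal))
        {p : (Fin m → Fin n → ℝ) × (Fin m → ℝ) |
          dH (Phi p.1 x) (fun i => sgn ((∑ j, p.1 i j * x j) + p.2 i)) > σ / 2 + γ}
      ≤ ENNReal.ofReal (Real.exp (-(2 * m * γ ^ 2))) := by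
  set F := {z : ℝ × ℝ | sgn z.1 ≠ sgn (z.1 + z.2)}
  set P := (gaussianReal 0 1).prod (gaussianReal 0 (σ ^ 2).toNNReal)
  set T : (Fin m → Fin n → ℝ) × (Fin m → ℝ) → Fin m → ℝ × ℝ :=
    fun p i => (∑ j, p.1 i j * x j, p.2 i)
  have hlaw : ((gaussianMatrix m n).prod
      (Measure.pi fun _ : Fin m => gaussianReal 0 ((σ ^ 2).toNNReal))).map T
      = Measure.pi fun _ => P := by
    have := map_prod_pi_eq_pi_prod (ι := Fin m) (Measure.pi fun _ : Fin n => gaussianReal 0 1)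
      (gaussianReal 0 (σ ^ 2).toNNReal) (f := fun a => ∑ j, a j * x j) (by fun_prop)
    rwa [map_pi_gaussianReal_sum_mul, hx, one_pow, Real.toNNReal_one] at this
  have hflip : P.real F ≤ σ / 2 := by
    have := measure_sgn_ne_sgn_add_le (σ ^ 2).toNNReal
    rw [Real.coe_toNNReal _ (sq_nonneg σ), Real.sqrt_sq hσ.le] at this
    exact ENNReal.toReal_le_of_le_ofReal (by positivity) this
  have hevent : {p : (Fin m → Fin n → ℝ) × (Fin m → ℝ) |
        dH (Phi p.1 x) (fun i => sgn ((∑ j, p.1 i j * x j) + p.2 i)) > σ / 2 + γ}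
      ⊆ T ⁻¹' {ω | (m : ℝ) * (σ / 2 + γ) ≤ ∑ i, F.indicator 1 (ω i)} := by
    intro p hp
    have hcard := natCast_mul_dH (Phi p.1 x) (fun i => sgn ((∑ j, p.1 i j * x j) + p.2 i))
    rw [Finset.natCast_card_filter] at hcard
    calc (m : ℝ) * (σ / 2 + γ) ≤ m * dH (Phi p.1 x) _ := by gcongr; exact le_of_lt hp
      _ = ∑ i, F.indicator 1 (T p i) := by
        rw [hcard]
        simp [Set.indicator_apply, F, T, Phi]
  calc _ ≤ _ := measure_mono hevent
    _ ≤ _ := Measure.le_map_apply (by fun_prop) _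
    _ = _ := by rw [hlaw, ← ofReal_measureReal]
    _ ≤ _ := ENNReal.ofReal_le_ofReal (by
      simpa using measureReal_pi_sum_indicator_ge_le (ι := Fin m) P
        measurableSet_sgn_ne_sgn_add hflip hγ.le)
end
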